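/- arXiv:1501.01751 — 6 statements merged into one kernel-verified Lean document; each statement's English description precedes it below -/
import Mathlib

section
/- Let X be an irreducible sofic shift and π: X → Y a finite-to-one factor code. Then a shift-invariant Borel probability measure μ on X has full topological support (supp(μ) = X) if and only if its pushforward πμ has full topological support in Y. -/
open MeasureTheory Set Filter Topology
open scoped ENNReal NNReal

/-- The shift map on the full shift `A^ℤ`. -/
def shiftMap {A : Type*} : (ℤ → A) → ℤ → A := fun x i => x (i + 1)

/-- The inverse shift map. -/
def shiftInvMap {A : Type*} : (ℤ → A) → ℤ → A := fun x i => x (i - 1)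

/-- The coordinatewise shift on `n`-tuples of points of the full shift. -/
def prodShift {A : Type*} {n : ℕ} : (Fin n → ℤ → A) → Fin n → ℤ → A :=
  fun x i => shiftMap (x i)

/-- A map between full shifts is a sliding block code if it is given by a local block map. -/
def IsSlidingBlockCode {A B : Type*} (π : (ℤ → A) → ℤ → B) : Prop :=
  ∃ (r : ℕ) (Φ : (Fin (2 * r + 1) → A) → B),
    ∀ x i, π x i = Φ fun j => x (i + (j : ℤ) - (r : ℤ))

/-- A subset of the full shift is a shift of finite type if it is the set of points
avoiding a (finite) set of forbidden words of some fixed length `N` (and is nonempty). -/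
def IsSFT {A : Type*} (X : Set (ℤ → A)) : Prop :=
  X.Nonempty ∧ ∃ (N : ℕ) (F : Set (Fin N → A)),
    X = {x | ∀ k : ℤ, (fun i : Fin N => x (k + (i : ℤ))) ∉ F}

/-- A sofic shift: the image of an SFT under a sliding block code. -/
def IsSofic {A : Type*} (X : Set (ℤ → A)) : Prop :=
  ∃ (m : ℕ) (Z : Set (ℤ → Fin m)) (φ : (ℤ → Fin m) → ℤ → A),
    IsSFT Z ∧ IsSlidingBlockCode φ ∧ φ '' Z = X

/-- A word occurs in the shift space `X`. -/
def WordIn {A : Type*} (X : Set (ℤ → A)) {n : ℕ} (w : Fin n → A) : Prop :=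
  ∃ x ∈ X, ∃ k : ℤ, ∀ i : Fin n, x (k + (i : ℤ)) = w i

/-- Irreducibility: any two words occurring in `X` can be seen in a single point of `X`,
with the first strictly to the left of the second (equivalently, `u w v` occurs in `X`). -/
def IsIrreducibleShift {A : Type*} (X : Set (ℤ → A)) : Prop :=
  ∀ {m n : ℕ} (u : Fin m → A) (v : Fin n → A), WordIn X u → WordIn X v →
    ∃ x ∈ X, ∃ i j : ℤ, i + (m : ℤ) ≤ j ∧ (∀ a : Fin m, x (i + (a : ℤ)) = u a) ∧
      ∀ b : Fin n, x (j + (b : ℤ)) = v b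

/-- `π` is a factor code from `X` onto `Y`: a sliding block code mapping `X` onto `Y`. -/
def IsFactorCodeOn {A B : Type*} (π : (ℤ → A) → ℤ → B) (X : Set (ℤ → A))
    (Y : Set (ℤ → B)) : Prop :=
  IsSlidingBlockCode π ∧ π '' X = Y

/-- A point of `Y` is doubly transitive if its forward and backward orbits are dense in `Y`. -/
def DoublyTransitiveIn {B : Type*} [TopologicalSpace B] (Y : Set (ℤ → B)) (y : ℤ → B) : Prop :=
  y ∈ Y ∧ Y ⊆ closure {z | ∃ n : ℕ, z = shiftMap^[n] y} ∧
    Y ⊆ closure {z | ∃ n : ℕ, z = shiftInvMap^[n] y}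

/-- The measure `μ` has full topological support on the shift space `X`:
every open set meeting `X` has positive measure. -/
def FullSupportOn {A : Type*} [TopologicalSpace A] [MeasurableSpace A]
    (μ : Measure (ℤ → A)) (X : Set (ℤ → A)) : Prop :=
  ∀ U : Set (ℤ → A), IsOpen U → (U ∩ X).Nonempty → 0 < μ U

/-- An `n`-fold `π`-relative joining supported on tuples from `X` with equal `π`-images. -/
def IsRelJoining {A B : Type*} [MeasurableSpace A] (X : Set (ℤ → A))
    (π : (ℤ → A) → ℤ → B) {n : ℕ} (lam : Measure (Fin n → ℤ → A)) : Prop :=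
  IsProbabilityMeasure lam ∧ MeasurePreserving prodShift lam lam ∧
    lam {x | (∀ i, x i ∈ X) ∧ ∀ i j, π (x i) = π (x j)} = 1

/-- A relative joining over `ν`: all the `π`-images of the marginals are `ν`. -/
def IsRelJoiningOver {A B : Type*} [MeasurableSpace A] [MeasurableSpace B]
    (X : Set (ℤ → A)) (π : (ℤ → A) → ℤ → B) (ν : Measure (ℤ → B)) {n : ℕ}
    (lam : Measure (Fin n → ℤ → A)) : Prop :=
  IsRelJoining X π lam ∧ ∀ i : Fin n, lam.map (fun x => π (x i)) = ν

/-- A relative joining is separating if a.e. tuple has pairwise distinct coordinates. -/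
def IsSeparating {A : Type*} [MeasurableSpace A] {n : ℕ}
    (lam : Measure (Fin n → ℤ → A)) : Prop :=
  lam {x | ∀ i j : Fin n, i ≠ j → x i ≠ x j} = 1

/-- A degree joining over `ν`: an ergodic `d`-fold separating relative joining over `ν`. -/
def IsDegreeJoining {A B : Type*} [MeasurableSpace A] [MeasurableSpace B]
    (X : Set (ℤ → A)) (π : (ℤ → A) → ℤ → B) (ν : Measure (ℤ → B)) (d : ℕ)
    (lam : Measure (Fin d → ℤ → A)) : Prop :=
  Ergodic prodShift lam ∧ IsRelJoiningOver X π ν lam ∧ IsSeparating lam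

/-- `x` is a generic point for the invariant measure `μ`: ergodic averages of every
continuous function converge to the integral. -/
def GenericFor {A : Type*} [TopologicalSpace A] [MeasurableSpace A] (x : ℤ → A)
    (μ : Measure (ℤ → A)) : Prop :=
  ∀ f : C(ℤ → A, ℝ),
    Tendsto (fun n : ℕ => (∑ k ∈ Finset.range n, f (shiftMap^[k] x)) / (n : ℝ))
      atTop (𝓝 (∫ z, f z ∂μ))

/-!
Only the reverse implication needs work. If `μ` vanishes on an open set meeting `X`, it vanishes
on a cylinder `[u]` of a word `u` of `X`, hence, by shift invariance, on every translate of it.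
So `μ` is carried by the closed set `S ⊆ X` of points in which `u` never occurs, and full support
of `π μ` forces `π S = π X`.

This is ruled out by counting words. Irreducibility of the sofic shift `X` links any two words
with a uniformly bounded gap `g`, so inserting `u` at each of the `n` positions of a word of `S`
of length `n` gives `n · |W_n(S)| ≤ C · |W_{n+c}(X)|`. Because `π` is finite-to-one, a word of
`X` is determined by its image, its two ends and its contexts in an SFT cover, whence
`|W_{n+c}(X)| ≤ K · |W(π X)| ≤ K · |W_{n+c}(S)| ≤ K' · |W_n(S)|` with constants independent of
`n`, which is absurd for large `n`.
-/

section Basic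

variable {α β γ : Type*}

def shiftBy (t : ℤ) (x : ℤ → α) : ℤ → α := fun i => x (i + t)

def slidingBlock (r : ℕ) (Φ : (Fin (2 * r + 1) → α) → β) (x : ℤ → α) : ℤ → β :=
  fun i => Φ fun j => x (i + j - r)

def OccursAt (x : ℤ → α) (k : ℤ) {n : ℕ} (w : Fin n → α) : Prop :=
  ∀ i : Fin n, x (k + i) = w i

def subword (x : ℤ → α) (k : ℤ) (n : ℕ) : Fin n → α := fun i => x (k + i)

def Avoids {N : ℕ} (F : Set (Fin N → γ)) (z : ℤ → γ) : Prop :=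
  ∀ k : ℤ, subword z k N ∉ F

def splice (c : ℤ) (z₁ z₂ : ℤ → α) : ℤ → α := fun i => if i < c then z₁ i else z₂ i

lemma shiftMap_iterate_apply (t : ℕ) (x : ℤ → α) (i : ℤ) : shiftMap^[t] x i = x (i + t) := by
  induction t generalizing x with
  | zero => simp
  | succ t ih =>
    rw [Function.iterate_succ_apply, ih]
    simp only [shiftMap]
    push_cast
    ring_nf

lemma IsSlidingBlockCode.exists_eq {π : (ℤ → α) → ℤ → β} (h : IsSlidingBlockCode π) :
    ∃ (r : ℕ) (Φ : (Fin (2 * r + 1) → α) → β), π = slidingBlock r Φ := by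
  obtain ⟨r, Φ, hπ⟩ := h
  exact ⟨r, Φ, funext fun x => funext fun i => hπ x i⟩

lemma occursAt_subword (x : ℤ → α) (k : ℤ) (n : ℕ) : OccursAt x k (subword x k n) :=
  fun _ => rfl

lemma wordIn_subword {X : Set (ℤ → α)} {x : ℤ → α} (hx : x ∈ X) (k : ℤ) (n : ℕ) :
    WordIn X (subword x k n) :=
  ⟨x, hx, k, fun _ => rfl⟩

lemma OccursAt.apply {x : ℤ → α} {k : ℤ} {n : ℕ} {w : Fin n → α} (h : OccursAt x k w)
    {t : ℕ} (ht : t < n) : x (k + t) = w ⟨t, ht⟩ :=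
  h ⟨t, ht⟩

lemma OccursAt.eq_of_occursAt {x y : ℤ → α} {k : ℤ} {n : ℕ} {w : Fin n → α}
    (hx : OccursAt x k w) (hy : OccursAt y k w) {i : ℤ} (h₁ : k ≤ i) (h₂ : i < k + n) :
    x i = y i := by
  obtain ⟨t, rfl⟩ : ∃ t : ℕ, i = k + t := ⟨(i - k).toNat, by omega⟩
  rw [hx.apply (by omega), hy.apply (by omega)]

lemma OccursAt.shiftBy {x : ℤ → α} {k : ℤ} {n : ℕ} {w : Fin n → α} (t : ℤ)
    (h : OccursAt x (k + t) w) : OccursAt (shiftBy t x) k w := by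
  intro i
  simpa [_root_.shiftBy, add_right_comm] using h i

lemma isClopen_setOf_occursAt [TopologicalSpace α] [DiscreteTopology α] (k : ℤ) {n : ℕ}
    (w : Fin n → α) : IsClopen {x : ℤ → α | OccursAt x k w} := by
  simp only [OccursAt, Set.ofPred_forall]
  exact isClopen_iInter_of_finite fun i =>
    (isClopen_discrete {w i}).preimage (continuous_apply (k + i))

lemma slidingBlock_congr {r : ℕ} {Φ : (Fin (2 * r + 1) → α) → β} {x y : ℤ → α} {i : ℤ}
    (h : ∀ j, i - r ≤ j → j ≤ i + r → x j = y j) :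
    slidingBlock r Φ x i = slidingBlock r Φ y i := by
  refine congrArg Φ (funext fun j => h _ ?_ ?_) <;> have := j.isLt <;> omega

lemma slidingBlock_shiftBy {r : ℕ} (Φ : (Fin (2 * r + 1) → α) → β) (t : ℤ) (x : ℤ → α) :
    slidingBlock r Φ (shiftBy t x) = shiftBy t (slidingBlock r Φ x) := by
  funext i
  refine congrArg Φ (funext fun j => congrArg x ?_)
  ring

lemma continuous_slidingBlock [TopologicalSpace α] [DiscreteTopology α] [TopologicalSpace β]
    (r : ℕ) (Φ : (Fin (2 * r + 1) → α) → β) : Continuous (slidingBlock r Φ) :=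
  continuous_pi fun _ =>
    continuous_of_discreteTopology.comp (continuous_pi fun _ => continuous_apply _)

lemma splice_of_lt {c i : ℤ} (z₁ z₂ : ℤ → α) (h : i < c) : splice c z₁ z₂ i = z₁ i :=
  if_pos h

lemma splice_of_le {c i : ℤ} (z₁ z₂ : ℤ → α) (h : c ≤ i) : splice c z₁ z₂ i = z₂ i :=
  if_neg (not_lt.2 h)

lemma splice_of_lt_add {c i : ℤ} {M : ℕ} {z₁ z₂ : ℤ → α}
    (hagree : ∀ j, c ≤ j → j < c + M → z₁ j = z₂ j) (h : i < c + M) :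
    splice c z₁ z₂ i = z₁ i := by
  rcases lt_or_ge i c with hi | hi
  · exact splice_of_lt z₁ z₂ hi
  · rw [splice_of_le z₁ z₂ hi, hagree i hi h]

section SFT

variable {N : ℕ} {F : Set (Fin N → γ)}

lemma Avoids.shiftBy {z : ℤ → γ} (h : Avoids F z) (t : ℤ) : Avoids F (shiftBy t z) := by
  intro k hk
  refine h (k + t) ?_
  convert hk using 1
  funext i
  simp only [subword, _root_.shiftBy]
  ring_nf

lemma Avoids.splice {z₁ z₂ : ℤ → γ} (h₁ : Avoids F z₁) (h₂ : Avoids F z₂) {c : ℤ} {M : ℕ}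
    (hM : N ≤ M + 1) (hagree : ∀ j, c ≤ j → j < c + M → z₁ j = z₂ j) :
    Avoids F (_root_.splice c z₁ z₂) := by
  intro k hk
  rcases lt_or_ge k c with hk' | hk'
  · refine h₁ k ?_
    convert hk using 1
    funext i
    exact (splice_of_lt_add hagree (by have := i.isLt; omega)).symm
  · refine h₂ k ?_
    convert hk using 1
    funext i
    exact (splice_of_le z₁ z₂ (by omega)).symm

lemma isClosed_setOf_avoids [TopologicalSpace γ] [DiscreteTopology γ] :
    IsClosed {z : ℤ → γ | Avoids F z} := by
  simp only [Avoids, Set.ofPred_forall]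
  exact isClosed_iInter fun k => (isClosed_discrete Fᶜ).preimage (f := fun z => subword z k N)
    (continuous_pi fun i => continuous_apply (k + i))

end SFT

end Basic

section Linking

variable {A C : Type*}

def Linked (X : Set (ℤ → A)) {m n : ℕ} (u : Fin m → A) (v : Fin n → A) (e : ℕ) : Prop :=
  ∃ x ∈ X, ∃ k : ℤ, OccursAt x k u ∧ OccursAt x (k + m + e) v

lemma IsIrreducibleShift.exists_linked_ge {X : Set (ℤ → A)} (hX : IsIrreducibleShift X)
    {m n : ℕ} {u : Fin m → A} {v : Fin n → A} (hu : WordIn X u) (hv : WordIn X v) (P : ℕ) :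
    ∃ e, P ≤ e ∧ Linked X u v e := by
  obtain ⟨x, hx, k, hk⟩ := hu
  obtain ⟨y, hy, i, j, hij, hu', hv'⟩ := hX (subword x k (m + P)) v (wordIn_subword hx k _) hv
  push_cast at hij
  refine ⟨(j - i - m).toNat, by omega, y, hy, i, fun a => ?_, ?_⟩
  · rw [← hk a]
    exact hu' ⟨a, by omega⟩
  · rwa [show i + m + ((j - i - m).toNat : ℕ) = j by omega]

variable {N : ℕ} {F : Set (Fin N → C)} {r : ℕ} {Φ : (Fin (2 * r + 1) → C) → A}

lemma slidingBlock_splice_of_lt {c i : ℤ} (z₁ z₂ : ℤ → C) (h : i + r < c) :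
    slidingBlock r Φ (splice c z₁ z₂) i = slidingBlock r Φ z₁ i :=
  slidingBlock_congr fun _ _ _ => splice_of_lt z₁ z₂ (by omega)

lemma slidingBlock_splice_of_le {c i : ℤ} (z₁ z₂ : ℤ → C) (h : c + r ≤ i) :
    slidingBlock r Φ (splice c z₁ z₂) i = slidingBlock r Φ z₂ i :=
  slidingBlock_congr fun _ _ _ => splice_of_le z₁ z₂ (by omega)

lemma slidingBlock_splice_of_lt_add {c i : ℤ} {M : ℕ} {z₁ z₂ : ℤ → C}
    (hagree : ∀ j, c ≤ j → j < c + M → z₁ j = z₂ j) (h : i + r < c + M) :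
    slidingBlock r Φ (splice c z₁ z₂) i = slidingBlock r Φ z₁ i :=
  slidingBlock_congr fun _ _ _ => splice_of_lt_add hagree (by omega)

lemma mem_image_slidingBlock_shiftBy {z : ℤ → C} (hz : Avoids F z) (t : ℤ) :
    shiftBy t (slidingBlock r Φ z) ∈ slidingBlock r Φ '' {z | Avoids F z} :=
  ⟨shiftBy t z, hz.shiftBy t, slidingBlock_shiftBy Φ t z⟩

variable (F Φ) in
def rightContext (M : ℕ) {n : ℕ} (u : Fin n → A) : Set (Fin M → C) :=
  {a | ∃ z, Avoids F z ∧ ∃ k, OccursAt (slidingBlock r Φ z) k u ∧ OccursAt z (k + n + r) a}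

variable (F Φ) in
def leftContext (M : ℕ) {n : ℕ} (v : Fin n → A) : Set (Fin M → C) :=
  {b | ∃ z, Avoids F z ∧ ∃ k, OccursAt (slidingBlock r Φ z) k v ∧ OccursAt z (k - r - M) b}

variable {M m m' n n' e : ℕ}

lemma Linked.of_rightContext_subset (hM : N ≤ M + 1) (he : 2 * r ≤ e)
    {u : Fin m → A} {u' : Fin m' → A} {v : Fin n → A}
    (hR : rightContext F Φ M u' ⊆ rightContext F Φ M u)
    (h : Linked (slidingBlock r Φ '' {z | Avoids F z}) u' v e) :
    Linked (slidingBlock r Φ '' {z | Avoids F z}) u v e := by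
  obtain ⟨_, ⟨z, hz, rfl⟩, k, hu', hv⟩ := h
  obtain ⟨z₁, hz₁, k₁, hu, ha⟩ := hR ⟨z, hz, k, hu', occursAt_subword z _ M⟩
  set t := k + m' - (k₁ + m)
  have ha' : OccursAt (shiftBy t z) (k₁ + m + r) (subword z (k + m' + r) M) :=
    OccursAt.shiftBy t <| by
      rw [show k₁ + m + r + t = k + m' + r by omega]
      exact occursAt_subword _ _ _
  refine ⟨_, ⟨_, hz₁.splice (hz.shiftBy t) hM fun j => ha.eq_of_occursAt ha', rfl⟩, k₁, ?_, ?_⟩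
  · intro i
    rw [← hu i, slidingBlock_splice_of_lt _ _ (by omega)]
  · intro i
    rw [← hv i, slidingBlock_splice_of_le _ _ (by omega), slidingBlock_shiftBy]
    simp only [shiftBy]
    congr 1
    omega

lemma Linked.of_leftContext_subset (hM : N ≤ M + 1) (he : 2 * r ≤ e)
    {u : Fin m → A} {v : Fin n → A} {v' : Fin n' → A}
    (hL : leftContext F Φ M v' ⊆ leftContext F Φ M v)
    (h : Linked (slidingBlock r Φ '' {z | Avoids F z}) u v' e) :
    Linked (slidingBlock r Φ '' {z | Avoids F z}) u v e := by
  obtain ⟨_, ⟨z, hz, rfl⟩, k, hu, hv'⟩ := h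
  obtain ⟨z₂, hz₂, k₂, hv, hb⟩ := hL ⟨z, hz, _, hv', occursAt_subword z _ M⟩
  set c := k + m + e - r - M
  set t := k₂ - (k + m + e)
  have hb' : OccursAt (shiftBy t z₂) c (subword z c M) :=
    OccursAt.shiftBy t (by rw [show c + t = k₂ - r - M by omega]; exact hb)
  refine ⟨_, ⟨_, hz.splice (hz₂.shiftBy t) hM
    fun j => (occursAt_subword z c M).eq_of_occursAt hb', rfl⟩, k, ?_, ?_⟩
  · intro i
    rw [← hu i, slidingBlock_splice_of_lt_add (fun j => (occursAt_subword z c M).eq_of_occursAt hb')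
      (by omega)]
  · intro i
    rw [← hv i, slidingBlock_splice_of_le _ _ (by omega), slidingBlock_shiftBy]
    simp only [shiftBy]
    congr 1
    omega

/-- Whether a gap `e ≥ 2 r` links `u` to `v` only depends on the right context of `u` and the
left context of `v`, and there are finitely many such pairs. -/
lemma IsIrreducibleShift.exists_linked_le [Finite C]
    (hX : IsIrreducibleShift (slidingBlock r Φ '' {z | Avoids F z})) :
    ∃ g : ℕ, ∀ {m n : ℕ} (u : Fin m → A) (v : Fin n → A),
      WordIn (slidingBlock r Φ '' {z | Avoids F z}) u →
      WordIn (slidingBlock r Φ '' {z | Avoids F z}) v →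
      ∃ e ≤ g, Linked (slidingBlock r Φ '' {z | Avoids F z}) u v e := by
  let Q : Set (Fin N → C) × Set (Fin N → C) → ℕ → Prop := fun c e => 2 * r ≤ e ∧
    ∃ (m n : ℕ) (u : Fin m → A) (v : Fin n → A), rightContext F Φ N u = c.1 ∧
      leftContext F Φ N v = c.2 ∧ Linked (slidingBlock r Φ '' {z | Avoids F z}) u v e
  obtain ⟨g, hg⟩ := (Set.finite_range fun c => sInf {e | Q c e}).bddAbove
  refine ⟨g, fun u v hu hv => ?_⟩
  obtain ⟨e₀, he₀, hl₀⟩ := hX.exists_linked_ge hu hv (2 * r)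
  obtain ⟨he, _, _, u', v', hR, hL, hl⟩ :=
    Nat.sInf_mem (s := {e | Q (rightContext F Φ N u, leftContext F Φ N v) e})
      ⟨e₀, he₀, _, _, u, v, rfl, rfl, hl₀⟩
  exact ⟨_, hg ⟨_, rfl⟩, ((hl.of_rightContext_subset N.le_succ he hR.le).of_leftContext_subset
    N.le_succ he hL.le)⟩

end Linking

section Recurrence

variable {A : Type*} {X : Set (ℤ → A)}

lemma IsIrreducibleShift.exists_extension_occursAt (hX : IsIrreducibleShift X)
    (hshift : ∀ x ∈ X, ∀ t, shiftBy t x ∈ X) {l : ℕ} {w : Fin l → A} (hw : WordIn X w)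
    {x : ℤ → A} (hx : x ∈ X) (L : ℕ) :
    ∃ x' p, x' ∈ X ∧ L ≤ p ∧ (∀ i : ℕ, i < L → x' i = x i) ∧ OccursAt x' p w := by
  obtain ⟨y, hy, i, j, hij, hxy, hwy⟩ := hX (subword x 0 L) w (wordIn_subword hx 0 L) hw
  refine ⟨shiftBy i y, (j - i).toNat, hshift y hy i, by omega, fun t ht => ?_, ?_⟩
  · simpa [shiftBy, subword, add_comm] using hxy ⟨t, ht⟩
  · exact OccursAt.shiftBy i (by rwa [show ((j - i).toNat : ℕ) + i = j by omega])

/-- Irreducibility appends one more occurrence of `w` at a time to an initial stretch of a point;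
compactness then yields a point carrying all of them. -/
lemma IsIrreducibleShift.exists_occursAt_infinitely_often [TopologicalSpace A]
    [DiscreteTopology A] [Finite A] (hX : IsIrreducibleShift X)
    (hXc : IsClosed X) (hshift : ∀ x ∈ X, ∀ t, shiftBy t x ∈ X) {l : ℕ} {w : Fin l → A}
    (hw : WordIn X w) :
    ∃ x ∈ X, ∃ q : ℕ → ℤ, (∀ a b, a < b → q a + l ≤ q b) ∧ ∀ n, OccursAt x (q n) w := by
  have ⟨x₀, hx₀, _⟩ := hw
  have : Nonempty (ℤ → A) := ⟨x₀⟩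
  choose! ext pos hext hpos hagree hocc using
    fun x (hx : x ∈ X) L => hX.exists_extension_occursAt hshift hw hx L
  let seq : ℕ → (ℤ → A) × ℕ := fun n =>
    Nat.rec (x₀, 0) (fun _ s => (ext s.1 s.2, pos s.1 s.2 + l)) n
  have hsucc : ∀ n, seq (n + 1) = (ext (seq n).1 (seq n).2, pos (seq n).1 (seq n).2 + l) :=
    fun _ => rfl
  let q : ℕ → ℕ := fun n => pos (seq n).1 (seq n).2
  have hseq : ∀ n, (seq n).1 ∈ X ∧ ∀ j < n, OccursAt (seq n).1 (q j) w ∧ q j + l ≤ (seq n).2 := by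
    intro n
    induction n with
    | zero => exact ⟨hx₀, fun j hj => absurd hj j.not_lt_zero⟩
    | succ n ih =>
      obtain ⟨hn, hprev⟩ := ih
      rw [hsucc]
      refine ⟨hext _ hn _, fun j hj => ?_⟩
      rcases Nat.lt_succ_iff_lt_or_eq.mp hj with hj | rfl
      · obtain ⟨hoc, hle⟩ := hprev j hj
        refine ⟨fun i => ?_, (hle.trans (hpos _ hn _)).trans (Nat.le_add_right _ _)⟩
        rw [← hoc i]
        exact_mod_cast hagree _ hn _ (q j + i) (by omega)
      · exact ⟨hocc _ hn _, le_rfl⟩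
  let D : ℕ → Set (ℤ → A) := fun n => X ∩ ⋂ j < n, {y | OccursAt y (q j) w}
  have hD : ∀ n, IsClosed (D n) := fun n => hXc.inter <| isClosed_iInter fun j =>
    isClosed_iInter fun _ => (isClopen_setOf_occursAt _ w).isClosed
  have hmono : ∀ n, D (n + 1) ⊆ D n := fun n =>
    Set.inter_subset_inter_right _ <| Set.biInter_mono (fun j hj => Nat.lt_succ_of_lt hj)
      fun _ _ => subset_rfl
  obtain ⟨x, hx⟩ := IsCompact.nonempty_iInter_of_sequence_nonempty_isCompact_isClosed D hmono
    (fun n => ⟨_, (hseq n).1, Set.mem_iInter₂.2 fun j hj => ((hseq n).2 j hj).1⟩)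
    (hD 0).isCompact hD
  simp only [D, Set.mem_iInter, Set.mem_inter_iff] at hx
  refine ⟨x, (hx 0).1, fun n => q n, fun a b hab => ?_, fun n => (hx (n + 1)).2 n n.lt_succ_self⟩
  show (q a : ℤ) + l ≤ pos (seq b).1 (seq b).2
  have := ((hseq b).2 a hab).2
  have := hpos _ (hseq b).1 (seq b).2
  omega

end Recurrence

section Swap

variable {A B C : Type*} {N : ℕ} {F : Set (Fin N → C)} {r : ℕ} {Φ : (Fin (2 * r + 1) → C) → A}

def imageWord {r : ℕ} (Φ : (Fin (2 * r + 1) → A) → B) {n : ℕ} (w : Fin (n + 2 * r) → A) :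
    Fin n → B :=
  fun t => Φ fun j => w ⟨t + j, by omega⟩

lemma OccursAt.slidingBlock {r : ℕ} {Φ : (Fin (2 * r + 1) → A) → B} {x : ℤ → A} {k : ℤ} {n : ℕ}
    {w : Fin (n + 2 * r) → A} (h : OccursAt x k w) :
    OccursAt (_root_.slidingBlock r Φ x) (k + r) (imageWord Φ w) := by
  intro t
  refine congrArg Φ (funext fun j => ?_)
  rw [← h ⟨t + j, by omega⟩]
  congr 1
  push_cast
  ring

variable (F Φ) in
def context (M : ℕ) {l : ℕ} (w : Fin l → A) : Set ((Fin M → C) × (Fin M → C)) :=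
  {p | ∃ z, Avoids F z ∧ ∃ k, OccursAt (slidingBlock r Φ z) k w ∧ OccursAt z k p.1 ∧
    OccursAt z (k + l - M) p.2}

variable {M l : ℕ}

/-- The lift of an occurrence of `w` is spliced with that of an occurrence of `w'` having the same
boundary blocks; `w` and `w'` must agree near their ends, where the splicing perturbs the image. -/
lemma exists_avoids_occursAt_swap (hM : N ≤ M + 1) (hMr : 2 * r ≤ M) (hMl : M ≤ l)
    {w w' : Fin l → A} (hmargin : ∀ i : Fin l, (i : ℕ) < M ∨ l ≤ i + M → w i = w' i)
    (hctx : context F Φ M w ⊆ context F Φ M w') {z : ℤ → C} (hz : Avoids F z) {q : ℤ}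
    (hq : OccursAt (slidingBlock r Φ z) q w) :
    ∃ z', Avoids F z' ∧ OccursAt (slidingBlock r Φ z') q w' ∧
      ∀ i, i < q ∨ q + l ≤ i → slidingBlock r Φ z' i = slidingBlock r Φ z i := by
  obtain ⟨z'', hz'', k, hw', h₁, h₂⟩ :=
    hctx (a := (subword z q M, subword z (q + l - M) M))
      ⟨z, hz, q, hq, occursAt_subword z q M, occursAt_subword z _ M⟩
  set c := q + l - M
  have h₁' : OccursAt (shiftBy (k - q) z'') q (subword z q M) :=
    OccursAt.shiftBy _ (by rwa [show q + (k - q) = k by ring])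
  have h₂' : OccursAt (shiftBy (k - q) z'') c (subword z c M) :=
    OccursAt.shiftBy _ (by rwa [show c + (k - q) = k + l - M by ring])
  have hagree₁ := fun j => (occursAt_subword z q M).eq_of_occursAt h₁' (i := j)
  have hagree₂ := fun j => (occursAt_subword z c M).eq_of_occursAt h₂' (i := j)
  set y := splice q z (shiftBy (k - q) z'')
  have hy : Avoids F y := hz.splice (hz''.shiftBy _) hM hagree₁
  have hyz : ∀ j, c ≤ j → j < c + M → y j = z j := fun j hj hj' =>
    (splice_of_le _ _ (by omega)).trans (hagree₂ j hj hj').symm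
  set zh := splice c y z
  have hleft : ∀ i, i + r < q + M → slidingBlock r Φ zh i = slidingBlock r Φ z i := fun i hi =>
    slidingBlock_congr fun j _ _ =>
      (splice_of_lt_add hyz (by omega)).trans (splice_of_lt_add hagree₁ (by omega))
  have hright : ∀ i, c + r ≤ i → slidingBlock r Φ zh i = slidingBlock r Φ z i := fun i hi =>
    slidingBlock_splice_of_le _ _ hi
  have hmid : ∀ i, q + r ≤ i → i + r < q + l →
      slidingBlock r Φ zh i = slidingBlock r Φ (shiftBy (k - q) z'') i := fun i hi hi' =>
    slidingBlock_congr fun j _ _ =>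
      (splice_of_lt_add hyz (by omega)).trans (splice_of_le _ _ (by omega))
  refine ⟨zh, hy.splice hz hM hyz, fun t => ?_, fun i hi => ?_⟩
  · have := t.isLt
    by_cases ht₁ : (t : ℕ) + r < M
    · rw [hleft _ (by omega), hq t, hmargin t (by omega)]
    by_cases ht₂ : (t : ℕ) + r < l
    · rw [hmid _ (by omega) (by omega), slidingBlock_shiftBy]
      simpa [shiftBy, add_right_comm] using hw' t
    · rw [hright _ (by omega), hq t, hmargin t (by omega)]
  · rcases hi with hi | hi
    · exact hleft i (by omega)
    · exact hright i (by omega)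

lemma slidingBlock_eq_of_imageWord_eq {Ψ : (Fin (2 * r + 1) → A) → B} {M n : ℕ} (hM : 2 * r ≤ M)
    {x x' : ℤ → A} {q : ℤ} {w w' : Fin (n + 2 * r) → A} (hw : OccursAt x q w)
    (hw' : OccursAt x' q w')
    (hmargin : ∀ i : Fin (n + 2 * r), (i : ℕ) < M ∨ n + 2 * r ≤ i + M → w i = w' i)
    (hout : ∀ i, i < q ∨ q + (n + 2 * r : ℕ) ≤ i → x' i = x i)
    (himg : imageWord Ψ w = imageWord Ψ w') :
    slidingBlock r Ψ x' = slidingBlock r Ψ x := by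
  funext i
  by_cases hi : q + r ≤ i ∧ i < q + r + n
  · obtain ⟨t, rfl⟩ : ∃ t : ℕ, i = q + r + t := ⟨(i - q - r).toNat, by omega⟩
    rw [hw'.slidingBlock ⟨t, by omega⟩, hw.slidingBlock ⟨t, by omega⟩, himg]
  refine slidingBlock_congr fun j _ _ => ?_
  by_cases hj : j < q ∨ q + (n + 2 * r : ℕ) ≤ j
  · exact hout j hj
  obtain ⟨t, rfl⟩ : ∃ t : ℕ, j = q + t := ⟨(j - q).toNat, by omega⟩
  rw [hw.apply (by omega), hw'.apply (by omega), hmargin _ (by simp only; omega)]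

lemma isClosed_image_slidingBlock [TopologicalSpace A] [DiscreteTopology A] [TopologicalSpace C]
    [DiscreteTopology C] [Finite C] : IsClosed (slidingBlock r Φ '' {z | Avoids F z}) :=
  (isClosed_setOf_avoids.isCompact.image (continuous_slidingBlock r Φ)).isClosed

/-- If `w ≠ w'`, swapping `w` for `w'` at any one of infinitely many occurrences of `w` in a single
point would give infinitely many points in one fibre. -/
theorem eq_of_imageWord_eq_of_context_subset [TopologicalSpace A] [DiscreteTopology A] [Finite A]
    [TopologicalSpace C] [DiscreteTopology C] [Finite C] {r' : ℕ} {Ψ : (Fin (2 * r' + 1) → A) → B}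
    (hirr : IsIrreducibleShift (slidingBlock r Φ '' {z | Avoids F z}))
    (hfto : ∀ y, (slidingBlock r Φ '' {z | Avoids F z} ∩ slidingBlock r' Ψ ⁻¹' {y}).Finite)
    {M n : ℕ} (hM : N ≤ M + 1) (hMr : 2 * r ≤ M) (hMr' : 2 * r' ≤ M) (hMn : M ≤ n + 2 * r')
    {w w' : Fin (n + 2 * r') → A} (hw : WordIn (slidingBlock r Φ '' {z | Avoids F z}) w)
    (hmargin : ∀ i : Fin (n + 2 * r'), (i : ℕ) < M ∨ n + 2 * r' ≤ i + M → w i = w' i)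
    (hctx : context F Φ M w ⊆ context F Φ M w') (himg : imageWord Ψ w = imageWord Ψ w') :
    w = w' := by
  by_contra hne
  obtain ⟨i₀, hi₀⟩ := Function.ne_iff.mp hne
  obtain ⟨_, ⟨z, hz, rfl⟩, q, hsep, hocc⟩ := hirr.exists_occursAt_infinitely_often
    isClosed_image_slidingBlock (fun _ ⟨z, hz, hx⟩ t => hx ▸ mem_image_slidingBlock_shiftBy hz t) hw
  choose z' hz' hw' hout using
    fun a => exists_avoids_occursAt_swap hM hMr hMn hmargin hctx hz (hocc a)
  have hfiber : ∀ a, slidingBlock r Φ (z' a) ∈ slidingBlock r Φ '' {z | Avoids F z} ∩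
      slidingBlock r' Ψ ⁻¹' {slidingBlock r' Ψ (slidingBlock r Φ z)} := fun a =>
    ⟨⟨_, hz' a, rfl⟩, slidingBlock_eq_of_imageWord_eq hMr' (hocc a) (hw' a) hmargin (hout a) himg⟩
  refine (hfto _).not_infinite (Set.infinite_of_injective_forall_mem (fun a b hab => ?_) hfiber)
  by_contra hab'
  have hb : slidingBlock r Φ (z' b) (q a + i₀) = w i₀ := by
    rw [hout b _ ?_, hocc a i₀]
    have := i₀.isLt
    rcases Nat.lt_or_gt_of_ne hab' with h | h
    · have := hsep a b h
      omega
    · have := hsep b a h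
      omega
  exact hi₀ (hb.symm.trans ((congrFun hab _).symm.trans (hw' a i₀)))

end Swap

section Counting

variable {A B : Type*}

def words (S : Set (ℤ → A)) (n : ℕ) : Set (Fin n → A) := {w | WordIn S w}

lemma words_mono {S T : Set (ℤ → A)} (h : S ⊆ T) (n : ℕ) : words S n ⊆ words T n :=
  fun _ ⟨x, hx, k, hk⟩ => ⟨x, h hx, k, hk⟩

lemma imageWord_mem_words_image {S : Set (ℤ → A)} {r n : ℕ} (Ψ : (Fin (2 * r + 1) → A) → B)
    {w : Fin (n + 2 * r) → A} (hw : w ∈ words S (n + 2 * r)) :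
    imageWord Ψ w ∈ words (slidingBlock r Ψ '' S) n := by
  obtain ⟨x, hx, k, hk : OccursAt x k w⟩ := hw
  exact ⟨_, ⟨x, hx, rfl⟩, _, hk.slidingBlock⟩

lemma words_image_subset (S : Set (ℤ → A)) {r : ℕ} (Ψ : (Fin (2 * r + 1) → A) → B) (n : ℕ) :
    words (slidingBlock r Ψ '' S) n ⊆ imageWord Ψ '' words S (n + 2 * r) := by
  rintro v ⟨_, ⟨x, hx, rfl⟩, k, hk⟩
  refine ⟨subword x (k - r) (n + 2 * r), wordIn_subword hx _ _, funext fun t => ?_⟩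
  rw [← hk t, ← (occursAt_subword x (k - r) (n + 2 * r)).slidingBlock t]
  simp

variable [Finite A]

lemma ncard_words_pos {S : Set (ℤ → A)} (hS : S.Nonempty) (n : ℕ) : 0 < (words S n).ncard :=
  have ⟨x, hx⟩ := hS
  (Set.ncard_pos (Set.toFinite _)).2 ⟨subword x 0 n, wordIn_subword hx 0 n⟩

lemma ncard_words_add_le (S : Set (ℤ → A)) (n c : ℕ) :
    (words S (n + c)).ncard ≤ (words S n).ncard * Nat.card (Fin c → A) := by
  rw [← Set.ncard_univ, ← Set.ncard_prod]
  refine Set.ncard_le_ncard_of_injOn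
    (fun w => (fun i => w (Fin.castAdd c i), fun i => w (Fin.natAdd n i)))
    (fun w ⟨x, hx, k, hk⟩ => ⟨⟨x, hx, k, fun i => hk (Fin.castAdd c i)⟩, trivial⟩)
    (fun w₁ _ w₂ _ h => ?_)
  rw [← Fin.append_castAdd_natAdd (f := w₁), ← Fin.append_castAdd_natAdd (f := w₂)]
  simp only [Prod.mk.injEq] at h
  rw [h.1, h.2]

lemma ncard_words_le_of_subset_image {S : Set (ℤ → A)} {Y : Set (ℤ → B)} {r : ℕ}
    {Ψ : (Fin (2 * r + 1) → A) → B} (h : Y ⊆ slidingBlock r Ψ '' S) (n : ℕ) :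
    (words Y n).ncard ≤ (words S (n + 2 * r)).ncard :=
  (Set.ncard_le_ncard ((words_mono h n).trans (words_image_subset S Ψ n))
    ((Set.toFinite _).image _)).trans (Set.ncard_image_le (Set.toFinite _))

end Counting

section FiniteToOne

variable {A B C : Type*} [TopologicalSpace A] [DiscreteTopology A] [Finite A]
  [TopologicalSpace C] [DiscreteTopology C] [Finite C]
  {N : ℕ} {F : Set (Fin N → C)} {r : ℕ} {Φ : (Fin (2 * r + 1) → C) → A}
  {r' : ℕ} {Ψ : (Fin (2 * r' + 1) → A) → B}

/-- A word of `X` is determined by its image, its first and last `M` letters and its context. -/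
theorem ncard_words_le_of_finite_fibers
    (hirr : IsIrreducibleShift (slidingBlock r Φ '' {z | Avoids F z}))
    (hfto : ∀ y, (slidingBlock r Φ '' {z | Avoids F z} ∩ slidingBlock r' Ψ ⁻¹' {y}).Finite)
    {M n : ℕ} (hM : N ≤ M + 1) (hMr : 2 * r ≤ M) (hMr' : 2 * r' ≤ M) (hMn : M ≤ n + 2 * r') :
    (words (slidingBlock r Φ '' {z | Avoids F z}) (n + 2 * r')).ncard ≤
      (words (slidingBlock r' Ψ '' (slidingBlock r Φ '' {z | Avoids F z})) n).ncard *
        Nat.card ((Fin M → A) × (Fin M → A) × Set ((Fin M → C) × (Fin M → C))) := by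
  rw [← Set.ncard_univ, ← Set.ncard_prod]
  refine Set.ncard_le_ncard_of_injOn (fun w => (imageWord Ψ w,
      fun i : Fin M => w (Fin.castLE hMn i), fun i : Fin M => w ⟨i + (n + 2 * r' - M), by omega⟩,
      context F Φ M w))
    (fun w hw => ⟨imageWord_mem_words_image Ψ hw, trivial⟩) (fun w₁ hw₁ w₂ _ h => ?_)
    ((((Set.toFinite _).image _).subset (words_image_subset _ Ψ n)).prod (Set.toFinite _))
  simp only [Prod.mk.injEq] at h
  obtain ⟨himg, hpre, hsuf, hctx⟩ := h
  refine eq_of_imageWord_eq_of_context_subset hirr hfto hM hMr hMr' hMn hw₁ (fun i hi => ?_)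
    hctx.le himg
  rcases hi with hi | hi
  · exact congrFun hpre ⟨i, hi⟩
  · have := congrFun hsuf ⟨i - (n + 2 * r' - M), by omega⟩
    simp only at this
    convert this using 2 <;> ext <;> simp only <;> omega

end FiniteToOne

section Insertion

variable {A : Type*} {X S : Set (ℤ → A)} {Lu n : ℕ} {u : Fin Lu → A}

def IsInsertion (x : ℤ → A) (k : ℤ) (s : Fin n → A) (j : ℕ) (u : Fin Lu → A) (e₁ e₂ : ℕ) :
    Prop :=
  (∀ t : Fin n, (t : ℕ) < j → x (k + t) = s t) ∧ OccursAt x (k + j + e₁) u ∧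
    ∀ t : Fin n, j ≤ (t : ℕ) → x (k + t + e₁ + Lu + e₂) = s t

lemma exists_isInsertion {g : ℕ}
    (hg : ∀ {m n : ℕ} (u : Fin m → A) (v : Fin n → A), WordIn X u → WordIn X v →
      ∃ e ≤ g, Linked X u v e)
    (hu : WordIn X u) {s : Fin n → A} (hs : WordIn X s) {j : ℕ} (hj : j ≤ n) :
    ∃ x ∈ X, ∃ k : ℤ, ∃ e₁ ≤ g, ∃ e₂ ≤ g, IsInsertion x k s j u e₁ e₂ := by
  obtain ⟨y, hy, k₀, hs⟩ := hs
  obtain ⟨e₁, he₁, x₁, hx₁, k₁, ha, hu₁⟩ := hg (subword y k₀ j) u (wordIn_subword hy _ _) hu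
  obtain ⟨e₂, he₂, x₂, hx₂, k₂, hc, hb⟩ := hg (subword x₁ k₁ (j + e₁ + Lu))
    (subword y (k₀ + j) (n - j)) (wordIn_subword hx₁ _ _) (wordIn_subword hy _ _)
  refine ⟨x₂, hx₂, k₂, e₁, he₁, e₂, he₂, fun t ht => ?_, fun i => ?_, fun t ht => ?_⟩
  · exact (hc.apply (by omega)).trans ((ha.apply ht).trans (hs t))
  · calc x₂ (k₂ + j + e₁ + i) = x₂ (k₂ + (j + e₁ + i : ℕ)) := by push_cast; ring_nf
      _ = x₁ (k₁ + (j + e₁ + i : ℕ)) := hc.apply (by omega)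
      _ = x₁ (k₁ + j + e₁ + i) := by push_cast; ring_nf
      _ = u i := hu₁ i
  · calc x₂ (k₂ + t + e₁ + Lu + e₂) = x₂ (k₂ + (j + e₁ + Lu : ℕ) + e₂ + (t - j : ℕ)) := by
          push_cast [ht]; ring_nf
      _ = y (k₀ + j + (t - j : ℕ)) := hb.apply (by omega)
      _ = y (k₀ + t) := by push_cast [ht]; ring_nf
      _ = s t := hs t

/-- As `u` does not occur in `S`, the `u` of one insertion cannot lie inside the `S`-prefix of
another insertion spelling the same window. -/
lemma IsInsertion.lt_add {x x' : ℤ → A} {k k' : ℤ} {s s' : Fin n → A} {j j' e₁ e₂ e₁' e₂' L : ℕ}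
    (hSu : ¬ WordIn S u) (hs' : WordIn S s') (h : IsInsertion x k s j u e₁ e₂)
    (h' : IsInsertion x' k' s' j' u e₁' e₂') (hj' : j' ≤ n)
    (hxx' : ∀ t : ℕ, t < L → x (k + t) = x' (k' + t)) (hL : j + e₁ + Lu ≤ L) :
    j' < j + e₁ + Lu := by
  by_contra hle
  obtain ⟨y, hy, k₀, hk₀⟩ := hs'
  refine hSu ⟨y, hy, k₀ + j + e₁, fun i => ?_⟩
  have hpos : j + e₁ + i < n := by omega
  calc y (k₀ + j + e₁ + i) = y (k₀ + (j + e₁ + i : ℕ)) := by push_cast; ring_nf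
    _ = s' ⟨_, hpos⟩ := hk₀ ⟨_, hpos⟩
    _ = x' (k' + (j + e₁ + i : ℕ)) := (h'.1 ⟨_, hpos⟩ (by simp only; omega)).symm
    _ = x (k + (j + e₁ + i : ℕ)) := (hxx' _ (by omega)).symm
    _ = x (k + j + e₁ + i) := by push_cast; ring_nf
    _ = u i := h.2.1 i


lemma IsInsertion.eq_of_modEq {x x' : ℤ → A} {k k' : ℤ} {s s' : Fin n → A} {j j' e₁ e₂ g : ℕ}
    (hSu : ¬ WordIn S u) (hs : WordIn S s) (hs' : WordIn S s') (hj : j < n) (hj' : j' < n)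
    (he₁ : e₁ ≤ g) (he₂ : e₂ ≤ g) (h : IsInsertion x k s j u e₁ e₂)
    (h' : IsInsertion x' k' s' j' u e₁ e₂)
    (hxx' : ∀ t : ℕ, t < n + Lu + 2 * g → x (k + t) = x' (k' + t))
    (hmod : j ≡ j' [MOD Lu + g + 1]) : s = s' ∧ j = j' := by
  have h₁ := h.lt_add hSu hs' h' hj'.le hxx' (by omega)
  have h₂ := h'.lt_add hSu hs h hj.le (fun t ht => (hxx' t ht).symm) (by omega)
  obtain rfl : j = j' := hmod.eq_of_abs_lt (abs_lt.2 ⟨by omega, by omega⟩)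
  refine ⟨funext fun t => ?_, rfl⟩
  have := t.isLt
  rcases lt_or_ge (t : ℕ) j with ht | ht
  · rw [← h.1 t ht, hxx' t (by omega), h'.1 t ht]
  · rw [← h.2.2 t ht, ← h'.2.2 t ht]
    have := hxx' (t + e₁ + Lu + e₂) (by omega)
    push_cast at this
    simpa only [add_assoc] using this

/-- Each of the `n` cut points of a word of `S` gives an insertion of `u`, and a window of `X`
arises from at most `(Lu + g + 1) (g + 1)²` of them. -/
theorem mul_ncard_words_le [Finite A] {g : ℕ}
    (hg : ∀ {m n : ℕ} (u : Fin m → A) (v : Fin n → A), WordIn X u → WordIn X v →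
      ∃ e ≤ g, Linked X u v e)
    (hSX : S ⊆ X) (hu : WordIn X u) (hSu : ¬ WordIn S u) (n : ℕ) :
    n * (words S n).ncard ≤
      (words X (n + Lu + 2 * g)).ncard * ((Lu + g + 1) * ((g + 1) * (g + 1))) := by
  have ⟨x₀, _⟩ := hu
  have : Nonempty (ℤ → A) := ⟨x₀⟩
  choose! x hx k e₁ he₁ e₂ he₂ hins using fun (p : (Fin n → A) × ℕ)
    (hp : p ∈ words S n ×ˢ Set.Iio n) =>
    exists_isInsertion hg hu (words_mono hSX n hp.1) (Nat.le_of_lt hp.2)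
  have hinj : Set.InjOn (fun p => (subword (x p) (k p) (n + Lu + 2 * g), p.2 % (Lu + g + 1),
      e₁ p, e₂ p)) (words S n ×ˢ Set.Iio n) := by
    intro p hp p' hp' h
    simp only [Prod.mk.injEq] at h
    obtain ⟨hsub, hmod, he₁', he₂'⟩ := h
    have hpins := hins p hp
    rw [he₁', he₂'] at hpins
    obtain ⟨hs, hj⟩ := hpins.eq_of_modEq hSu hp.1 hp'.1 hp.2 hp'.2 (he₁ p' hp')
      (he₂ p' hp') (hins p' hp') (fun t ht => congrFun hsub ⟨t, ht⟩) hmod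
    exact Prod.ext hs hj
  calc n * (words S n).ncard = (words S n ×ˢ Set.Iio n).ncard := by
        rw [Set.ncard_prod, Set.ncard_Iio_nat, mul_comm]
    _ ≤ (words X (n + Lu + 2 * g) ×ˢ (Set.Iio (Lu + g + 1) ×ˢ (Set.Iic g ×ˢ Set.Iic g))).ncard :=
        Set.ncard_le_ncard_of_injOn _ (by
          exact fun p hp => ⟨wordIn_subword (hx p hp) _ _, Nat.mod_lt _ (Nat.succ_pos _),
            he₁ p hp, he₂ p hp⟩) hinj
    _ = _ := by simp only [Set.ncard_prod, Set.ncard_Iio_nat, Set.ncard_Iic_nat]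

end Insertion

section Entropy

variable {A B C : Type*} [TopologicalSpace A] [DiscreteTopology A] [Finite A]
  [TopologicalSpace C] [DiscreteTopology C] [Finite C]
  {N : ℕ} {F : Set (Fin N → C)} {r : ℕ} {Φ : (Fin (2 * r + 1) → C) → A}
  {r' : ℕ} {Ψ : (Fin (2 * r' + 1) → A) → B}

theorem not_image_subset_image_of_not_wordIn
    (hirr : IsIrreducibleShift (slidingBlock r Φ '' {z | Avoids F z}))
    (hfto : ∀ y, (slidingBlock r Φ '' {z | Avoids F z} ∩ slidingBlock r' Ψ ⁻¹' {y}).Finite)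
    {S : Set (ℤ → A)} (hSX : S ⊆ slidingBlock r Φ '' {z | Avoids F z}) (hS : S.Nonempty)
    {Lu : ℕ} {u : Fin Lu → A} (hu : WordIn (slidingBlock r Φ '' {z | Avoids F z}) u)
    (hSu : ¬ WordIn S u) :
    ¬ slidingBlock r' Ψ '' (slidingBlock r Φ '' {z | Avoids F z}) ⊆ slidingBlock r' Ψ '' S := by
  intro hYS
  obtain ⟨g, hg⟩ := hirr.exists_linked_le
  set M := N + 2 * r + 2 * r'
  set Q := (Lu + g + 1) * ((g + 1) * (g + 1)) *
    Nat.card ((Fin M → A) × (Fin M → A) × Set ((Fin M → C) × (Fin M → C))) *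
    Nat.card (Fin (Lu + 2 * g) → A)
  set n := Q + 1 + M + 2 * r'
  set n' := Q + 1 + M + Lu + 2 * g
  have hlen : n' + 2 * r' = n + (Lu + 2 * g) := by omega
  have h₁ := mul_ncard_words_le hg hSX hu hSu n
  have h₂ := ncard_words_le_of_finite_fibers (Ψ := Ψ) (n := n') hirr hfto (M := M) (by omega)
    (by omega) (by omega) (by omega)
  have h₃ := ncard_words_le_of_subset_image hYS n'
  have h₄ := ncard_words_add_le S n (Lu + 2 * g)
  rw [hlen] at h₂ h₃
  rw [← add_assoc] at h₂ h₃ h₄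
  have hpos := ncard_words_pos hS n
  have : n * (words S n).ncard ≤ Q * (words S n).ncard := by
    refine h₁.trans ?_
    calc _ ≤ _ := Nat.mul_le_mul_right _ (h₂.trans (Nat.mul_le_mul_right _ (h₃.trans h₄)))
      _ = Q * (words S n).ncard := by ring
  have := Nat.le_of_mul_le_mul_right this hpos
  omega

end Entropy

section Support

variable {A B : Type*} [TopologicalSpace A]

lemma exists_cylinder_subset {U : Set (ℤ → A)} (hU : IsOpen U) {x : ℤ → A} (hx : x ∈ U) :
    ∃ (k : ℤ) (n : ℕ), {y | OccursAt y k (subword x k n)} ⊆ U := by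
  obtain ⟨I, o, hI, hsub⟩ := isOpen_pi_iff.mp hU x hx
  set b := I.sup Int.natAbs
  refine ⟨-b, 2 * b + 1, fun y hy => hsub fun a ha => ?_⟩
  have hab : a.natAbs ≤ b := Finset.le_sup ha
  have := hy.apply (t := (a + b).toNat) (by omega)
  simp only [subword, show -(b : ℤ) + ((a + b).toNat : ℕ) = a by omega] at this
  exact this ▸ (hI a ha).2

variable [MeasurableSpace A] [OpensMeasurableSpace (ℤ → A)] {μ : Measure (ℤ → A)}

lemma measure_setOf_occursAt_eq [DiscreteTopology A] (hμ : MeasurePreserving shiftMap μ μ)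
    {n : ℕ} (w : Fin n → A) (k k' : ℤ) : μ {y | OccursAt y k w} = μ {y | OccursAt y k' w} := by
  wlog hkk' : k ≤ k' generalizing k k'
  · exact (this k' k (by omega)).symm
  obtain ⟨t, rfl⟩ : ∃ t : ℕ, k' = k + t := ⟨(k' - k).toNat, by omega⟩
  have hpre : {y | OccursAt y (k + t) w} = shiftMap^[t] ⁻¹' {y | OccursAt y k w} := by
    ext y
    simp only [Set.mem_ofPred_eq, Set.mem_preimage, OccursAt, shiftMap_iterate_apply,
      add_right_comm]
  rw [hpre, (hμ.iterate t).measure_preimage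
    (isClopen_setOf_occursAt k w).isOpen.measurableSet.nullMeasurableSet]

lemma measure_setOf_wordIn_eq_zero [DiscreteTopology A] (hμ : MeasurePreserving shiftMap μ μ)
    {n : ℕ} {w : Fin n → A} {k : ℤ} (h : μ {y | OccursAt y k w} = 0) :
    μ {y | ∃ k, OccursAt y k w} = 0 := by
  rw [Set.ofPred_exists]
  exact measure_iUnion_null fun k' => (measure_setOf_occursAt_eq hμ w k' k).trans h

variable [TopologicalSpace B] [MeasurableSpace B] [BorelSpace (ℤ → B)]

lemma FullSupportOn.map {X : Set (ℤ → A)} (h : FullSupportOn μ X) {π : (ℤ → A) → ℤ → B}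
    (hπ : Continuous π) : FullSupportOn (μ.map π) (π '' X) := by
  rintro U hU ⟨_, hyU, x, hx, rfl⟩
  rw [Measure.map_apply hπ.measurable hU.measurableSet]
  exact h _ (hU.preimage hπ) ⟨x, hyU, hx⟩

lemma subset_image_of_fullSupportOn_map [T2Space B] {π : (ℤ → A) → ℤ → B} (hπ : Continuous π)
    {S : Set (ℤ → A)} (hS : IsCompact S) (hμS : μ Sᶜ = 0) {Y : Set (ℤ → B)}
    (hY : FullSupportOn (μ.map π) Y) : Y ⊆ π '' S := by
  intro y hy
  by_contra hyS
  have hc := (hS.image hπ).isClosed.isOpen_compl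
  have := hY _ hc ⟨y, hyS, hy⟩
  rw [Measure.map_apply hπ.measurable hc.measurableSet] at this
  exact this.ne' (measure_mono_null (fun x hx hxS => hx (Set.mem_image_of_mem π hxS)) hμS)

end Support

/-- Let `X` be an irreducible sofic shift and `π : X → Y` a finite-to-one
factor code. A shift-invariant Borel probability measure `μ` on `X` has full topological
support (on `X`) iff its pushforward `π μ` has full topological support (on `Y`). -/
theorem fullSupport_iff_fullSupport_image
    {A B : Type*} [Fintype A] [Fintype B]
    [TopologicalSpace A] [DiscreteTopology A] [MeasurableSpace A] [BorelSpace A]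
    [TopologicalSpace B] [DiscreteTopology B] [MeasurableSpace B] [BorelSpace B]
    (X : Set (ℤ → A)) (Y : Set (ℤ → B)) (π : (ℤ → A) → ℤ → B)
    (hXsofic : IsSofic X) (hXirr : IsIrreducibleShift X)
    (hfc : IsFactorCodeOn π X Y)
    (hfto : ∀ y : ℤ → B, (X ∩ π ⁻¹' {y}).Finite)
    (μ : Measure (ℤ → A)) [IsProbabilityMeasure μ]
    (hinv : MeasurePreserving shiftMap μ μ) (hX1 : μ X = 1) :
    FullSupportOn μ X ↔ FullSupportOn (μ.map π) Y := by
  obtain ⟨r', Ψ, rfl⟩ := hfc.1.exists_eq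
  obtain rfl := hfc.2
  obtain ⟨m, _, φ, ⟨-, N, F, rfl⟩, hφ, rfl⟩ := hXsofic
  obtain ⟨r, Φ, rfl⟩ := hφ.exists_eq
  change IsIrreducibleShift (slidingBlock r Φ '' {z | Avoids F z}) at hXirr
  set X := slidingBlock r Φ '' {z | Avoids F z}
  refine ⟨fun h => h.map (continuous_slidingBlock r' Ψ), fun hY U hU ⟨x, hxU, hxX⟩ => ?_⟩
  obtain ⟨k, n, hsub⟩ := exists_cylinder_subset hU hxU
  refine pos_iff_ne_zero.2 fun hU0 => ?_
  set W := {y | ∃ k', OccursAt y k' (subword x k n)}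
  have hW : IsOpen W := by
    simpa only [W, Set.ofPred_exists] using
      isOpen_iUnion fun k' => (isClopen_setOf_occursAt k' _).isOpen
  have hXc : IsClosed X := isClosed_image_slidingBlock
  have hS : μ (X \ W)ᶜ = 0 := by
    rw [Set.compl_sdiff]
    exact measure_union_null (measure_setOf_wordIn_eq_zero hinv (measure_mono_null hsub hU0))
      ((prob_compl_eq_zero_iff hXc.measurableSet).2 hX1)
  have hSne : (X \ W).Nonempty := nonempty_of_measure_ne_zero <|
    ((prob_compl_eq_zero_iff (hXc.sdiff hW).measurableSet).1 hS).symm ▸ one_ne_zero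
  exact not_image_subset_image_of_not_wordIn hXirr hfto Set.sdiff_subset hSne
    (wordIn_subword hxX k n) (fun ⟨y, hy, k', hk'⟩ => hy.2 ⟨k', hk'⟩)
    (subset_image_of_fullSupportOn_map (continuous_slidingBlock r' Ψ) (hXc.sdiff hW).isCompact
      hS hY)
end

section
/- Let X be an irreducible sofic shift, π: X → Y a finite-to-one factor code of degree d_π, and ν a fully supported ergodic shift-invariant measure on Y. If λ and λ' are two degree joinings over ν, then there is a permutation f of {1,…,d_π} such that λ' = p_f λ, where p_f: X^{d_π} → X^{d_π} sends (x₁,…,x_{d_π}) to (x_{f(1)},…,x_{f(d_π)}). -/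
open MeasureTheory Set Filter Topology
open scoped ENNReal NNReal

variable {A B : Type*} [Fintype A] [Fintype B]
  [TopologicalSpace A] [DiscreteTopology A] [MeasurableSpace A] [BorelSpace A]
  [TopologicalSpace B] [DiscreteTopology B] [MeasurableSpace B] [BorelSpace B]

/-!
For `ν`-a.e. `y` the point `y` is doubly transitive (ergodicity plus full support), so its fibre
has exactly `d` points, and a tuple drawn from a separating relative joining over `ν` is a.s. an
enumeration of the fibre over its common image `y`. Sorting the coordinates along a measurable
injection into `ℝ` picks one enumeration per fibre, on which `x ↦ π (x 0)` is injective; by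
Lusin–Souslin every permutation-invariant set is then, up to null sets, the preimage of a measurable
set of `y`s, so it has the same measure under `λ` and `λ'`. Hence `λ'` is absolutely continuous
with respect to `∑_f p_f λ`; since distinct ergodic measures are mutually singular, `λ'` is one of
the `p_f λ`.
-/

open Function

theorem shiftInvMap_shiftMap {α : Type*} (x : ℤ → α) : shiftInvMap (shiftMap x) = x := by
  funext i
  simp [shiftMap, shiftInvMap]

theorem measurable_shiftMap {α : Type*} [MeasurableSpace α] : Measurable (shiftMap (A := α)) :=
  measurable_pi_lambda _ fun i => measurable_pi_apply (i + 1)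

theorem measurable_shiftInvMap {α : Type*} [MeasurableSpace α] :
    Measurable (shiftInvMap (A := α)) :=
  measurable_pi_lambda _ fun i => measurable_pi_apply (i - 1)

theorem measurable_prodShift {α : Type*} [MeasurableSpace α] {n : ℕ} :
    Measurable (prodShift (A := α) (n := n)) :=
  measurable_pi_lambda _ fun i => measurable_shiftMap.comp (measurable_pi_apply i)

theorem IsSlidingBlockCode.continuous {α β : Type*} [TopologicalSpace α] [DiscreteTopology α]
    [TopologicalSpace β] {π : (ℤ → α) → ℤ → β} (h : IsSlidingBlockCode π) : Continuous π := by
  obtain ⟨r, Φ, hΦ⟩ := h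
  rw [show π = fun x i => Φ fun j => x (i + (j : ℤ) - (r : ℤ)) from funext₂ hΦ]
  fun_prop

theorem IsSFT.isClosed {α : Type*} [TopologicalSpace α] [DiscreteTopology α] {X : Set (ℤ → α)}
    (h : IsSFT X) : IsClosed X := by
  obtain ⟨-, N, F, rfl⟩ := h
  simp only [Set.ofPred_forall]
  exact isClosed_iInter fun k => (isClosed_discrete Fᶜ).preimage (by fun_prop)

theorem IsSofic.isCompact {α : Type*} [TopologicalSpace α] [DiscreteTopology α]
    {X : Set (ℤ → α)} (h : IsSofic X) : IsCompact X := by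
  obtain ⟨m, Z, φ, hZ, hφ, rfl⟩ := h
  exact hZ.isClosed.isCompact.image hφ.continuous

section Ergodic

variable {α : Type*} [MeasurableSpace α] {μ ν : Measure α} {f g : α → α}

theorem Ergodic.of_leftInverse (hf : Ergodic f μ) (hg : Measurable g) (hgf : LeftInverse g f) :
    Ergodic g μ := by
  refine ⟨⟨hg, ?_⟩, ⟨fun s hs hgs => hf.aeconst_set hs ?_⟩⟩
  · nth_rw 1 [← hf.map_eq]
    rw [Measure.map_map hg hf.measurable, hgf.comp_eq_id, Measure.map_id]
  · nth_rw 1 [← hgs]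
    rw [← Set.preimage_comp, hgf.comp_eq_id, Set.preimage_id]

theorem Ergodic.ae_exists_iterate_mem [IsFiniteMeasure μ] (hf : Ergodic f μ) {s : Set α}
    (hs : MeasurableSet s) (hμs : μ s ≠ 0) : ∀ᵐ x ∂μ, ∃ n : ℕ, f^[n] x ∈ s := by
  set V := ⋃ n : ℕ, f^[n] ⁻¹' s
  have hV : MeasurableSet V := .iUnion fun n => hs.preimage (hf.measurable.iterate n)
  have hfV : f ⁻¹' V ⊆ V := by
    simp only [V, Set.preimage_iUnion, ← Set.preimage_comp, ← iterate_succ]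
    exact Set.iUnion_subset fun n => Set.subset_iUnion (fun n => f^[n] ⁻¹' s) (n + 1)
  rcases hf.ae_empty_or_univ_of_preimage_ae_le' hV.nullMeasurableSet hfV.eventuallyLE
    (measure_ne_top μ V) with h | h
  · exact absurd (measure_mono_null (Set.subset_iUnion (fun n => f^[n] ⁻¹' s) 0)
      (ae_eq_empty.mp h)) hμs
  · filter_upwards [h.mem_iff] with x hx
    exact Set.mem_iUnion.mp (hx.mpr trivial)

theorem Ergodic.ae_subset_closure_orbit [TopologicalSpace α] [SecondCountableTopology α]
    [OpensMeasurableSpace α] [IsFiniteMeasure μ] (hf : Ergodic f μ) {Y : Set α}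
    (hY : ∀ U, IsOpen U → (U ∩ Y).Nonempty → 0 < μ U) :
    ∀ᵐ x ∂μ, Y ⊆ closure {z | ∃ n : ℕ, z = f^[n] x} := by
  obtain ⟨b, hbc, -, hb⟩ := TopologicalSpace.exists_countable_basis α
  have hvisit : ∀ᵐ x ∂μ, ∀ U ∈ {U ∈ b | (U ∩ Y).Nonempty}, ∃ n : ℕ, f^[n] x ∈ U :=
    (ae_ball_iff (hbc.mono (Set.sep_subset _ _))).mpr fun U hU =>
      hf.ae_exists_iterate_mem (hb.isOpen hU.1).measurableSet (hY U (hb.isOpen hU.1) hU.2).ne'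
  filter_upwards [hvisit] with x hx z hz
  refine mem_closure_iff.mpr fun V hV hzV => ?_
  obtain ⟨U, hUb, hzU, hUV⟩ := hb.exists_subset_of_mem_open hzV hV
  obtain ⟨n, hn⟩ := hx U ⟨hUb, z, hzU, hz⟩
  exact ⟨_, hUV hn, n, rfl⟩

theorem Ergodic.eq_or_mutuallySingular [IsProbabilityMeasure μ] [IsProbabilityMeasure ν]
    (hμ : Ergodic f μ) (hν : Ergodic f ν) : μ = ν ∨ μ ⟂ₘ ν := by
  obtain ⟨c, hc⟩ := hν.eq_smul_of_absolutelyContinuous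
    (hμ.toMeasurePreserving.withDensity_rnDeriv hν.toMeasurePreserving)
    (withDensity_absolutelyContinuous _ _)
  rcases eq_or_ne c 0 with rfl | hc0
  · rw [zero_smul, Measure.withDensity_rnDeriv_eq_zero] at hc
    exact .inr hc
  · have hνμ : ν ≪ μ := (Measure.absolutelyContinuous_smul hc0).trans
      (hc ▸ Measure.absolutelyContinuous_of_le (Measure.withDensity_rnDeriv_le μ ν))
    exact .inl (hμ.eq_of_absolutelyContinuous hν.toMeasurePreserving hνμ).symm

theorem Ergodic.exists_eq_of_absolutelyContinuous_sum {ι : Type*} [Countable ι]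
    {μ : ι → Measure α} [∀ i, IsProbabilityMeasure (μ i)] [IsProbabilityMeasure ν]
    (hν : Ergodic f ν) (hμ : ∀ i, Ergodic f (μ i)) (hνμ : ν ≪ Measure.sum μ) :
    ∃ i, ν = μ i := by
  by_contra! hne
  have hsing : ν ⟂ₘ Measure.sum μ := Measure.MutuallySingular.sum_right.mpr fun i =>
    (hν.eq_or_mutuallySingular (hμ i)).resolve_left (hne i)
  exact IsProbabilityMeasure.ne_zero ν
    (Measure.eq_zero_of_absolutelyContinuous_of_mutuallySingular hνμ hsing)

end Ergodic

theorem ae_doublyTransitiveIn {β : Type*} [TopologicalSpace β] [SecondCountableTopology β]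
    [MeasurableSpace β] [OpensMeasurableSpace β] {Y : Set (ℤ → β)} (hY : MeasurableSet Y)
    {ν : Measure (ℤ → β)} [IsProbabilityMeasure ν] (hν : Ergodic shiftMap ν) (hνY : ν Y = 1)
    (hνfull : FullSupportOn ν Y) : ∀ᵐ y ∂ν, DoublyTransitiveIn Y y := by
  have hν' : Ergodic shiftInvMap ν :=
    hν.of_leftInverse measurable_shiftInvMap shiftInvMap_shiftMap
  filter_upwards [(mem_ae_iff_prob_eq_one hY).mpr hνY, hν.ae_subset_closure_orbit hνfull,
    hν'.ae_subset_closure_orbit hνfull] with y hyY hfwd hbwd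
  exact ⟨hyY, hfwd, hbwd⟩

theorem Function.Injective.range_eq_of_encard_eq {α : Type*} {d : ℕ} {x : Fin d → α}
    (hx : Injective x) {s : Set α} (hxs : Set.range x ⊆ s) (hs : s.encard = d) :
    Set.range x = s :=
  (Set.finite_range x).eq_of_subset_of_encard_le hxs (by simpa [hs] using hx.encard_range)

theorem exists_perm_strictMono_comp {β : Type*} [LinearOrder β] {d : ℕ} {x : Fin d → β}
    (hx : Injective x) : ∃ σ : Equiv.Perm (Fin d), StrictMono (x ∘ σ) :=
  ⟨Tuple.sort x, (Tuple.monotone_sort x).strictMono_of_injective (hx.comp (Equiv.injective _))⟩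

section PermInvariant

variable {α : Type*} {d : ℕ}

def IsPermInvariant (E : Set (Fin d → α)) : Prop :=
  ∀ σ : Equiv.Perm (Fin d), ∀ x ∈ E, (fun i => x (σ i)) ∈ E

variable [MeasurableSpace α]

theorem measurable_comp_perm (σ : Equiv.Perm (Fin d)) :
    Measurable fun (x : Fin d → α) i => x (σ i) :=
  measurable_pi_lambda _ fun i => measurable_pi_apply (σ i)

theorem exists_measurableSet_inter_eq_preimage_inter [StandardBorelSpace α] {β : Type*}
    [MeasurableSpace β] [MeasurableSpace.CountablySeparated β] {G : Set (Fin d → α)}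
    (hG : MeasurableSet G) (hGinj : ∀ x ∈ G, Injective x) (hGperm : IsPermInvariant G)
    {q : (Fin d → α) → β} (hq : Measurable q)
    (hqperm : ∀ x ∈ G, ∀ σ : Equiv.Perm (Fin d), q (fun i => x (σ i)) = q x)
    (hqrange : ∀ x ∈ G, ∀ x' ∈ G, q x = q x' → Set.range x = Set.range x')
    {E : Set (Fin d → α)} (hE : MeasurableSet E) (hEperm : IsPermInvariant E) :
    ∃ F, MeasurableSet F ∧ E ∩ G = q ⁻¹' F ∩ G := by
  obtain ⟨θ, hθ⟩ := exists_measurableEmbedding_real α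
  set S := {x : Fin d → α | StrictMono (θ ∘ x)}
  have hS : MeasurableSet S := by
    simp only [S, StrictMono, comp_apply]
    measurability
  have hsort : ∀ x ∈ G, ∃ σ : Equiv.Perm (Fin d), (fun i => x (σ i)) ∈ S := fun x hx =>
    exists_perm_strictMono_comp (hθ.injective.comp (hGinj x hx))
  have hinj : Set.InjOn q (G ∩ S) := by
    rintro x ⟨hxG, hxS⟩ x' ⟨hx'G, hx'S⟩ hqx
    have := (StrictMono.range_inj hxS hx'S).mp
      (by rw [Set.range_comp, Set.range_comp, hqrange x hxG x' hx'G hqx])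
    exact funext fun i => hθ.injective (congrFun this i)
  refine ⟨q '' (E ∩ (G ∩ S)), (hE.inter (hG.inter hS)).image_of_measurable_injOn hq
    (hinj.mono Set.inter_subset_right), Set.ext fun x => ⟨?_, ?_⟩⟩
  · rintro ⟨hxE, hxG⟩
    obtain ⟨σ, hσ⟩ := hsort x hxG
    exact ⟨⟨_, ⟨hEperm σ x hxE, hGperm σ x hxG, hσ⟩, hqperm x hxG σ⟩, hxG⟩
  · rintro ⟨⟨z, ⟨hzE, hzG, hzS⟩, hzx⟩, hxG⟩
    obtain ⟨σ, hσ⟩ := hsort x hxG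
    have hxz : (fun i => x (σ i)) = z :=
      hinj ⟨hGperm σ x hxG, hσ⟩ ⟨hzG, hzS⟩ (by rw [hqperm x hxG, hzx])
    subst hxz
    exact ⟨by simpa using hEperm σ⁻¹ _ hzE, hxG⟩

theorem measure_eq_of_isPermInvariant [StandardBorelSpace α] {β : Type*}
    [MeasurableSpace β] [MeasurableSpace.CountablySeparated β] {G : Set (Fin d → α)}
    (hG : MeasurableSet G) (hGinj : ∀ x ∈ G, Injective x) (hGperm : IsPermInvariant G)
    {q : (Fin d → α) → β} (hq : Measurable q)
    (hqperm : ∀ x ∈ G, ∀ σ : Equiv.Perm (Fin d), q (fun i => x (σ i)) = q x)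
    (hqrange : ∀ x ∈ G, ∀ x' ∈ G, q x = q x' → Set.range x = Set.range x')
    {κ κ' : Measure (Fin d → α)} (hκG : ∀ᵐ x ∂κ, x ∈ G) (hκ'G : ∀ᵐ x ∂κ', x ∈ G)
    (hκκ' : κ.map q = κ'.map q) {E : Set (Fin d → α)} (hE : MeasurableSet E)
    (hEperm : IsPermInvariant E) : κ E = κ' E := by
  obtain ⟨F, hF, hEF⟩ :=
    exists_measurableSet_inter_eq_preimage_inter hG hGinj hGperm hq hqperm hqrange hE hEperm
  have hκ : κ Gᶜ = 0 := hκG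
  have hκ' : κ' Gᶜ = 0 := hκ'G
  calc κ E = κ (q ⁻¹' F ∩ G) := by rw [← hEF, measure_inter_conull hκ]
    _ = κ' (q ⁻¹' F ∩ G) := by
      rw [measure_inter_conull hκ, measure_inter_conull hκ', ← Measure.map_apply hq hF,
        ← Measure.map_apply hq hF, hκκ']
    _ = κ' E := by rw [← hEF, measure_inter_conull hκ']

theorem absolutelyContinuous_sum_map_comp_perm {κ κ' : Measure (Fin d → α)}
    (h : ∀ E, MeasurableSet E → IsPermInvariant E → κ' E = κ E) :
    κ' ≪ Measure.sum fun σ : Equiv.Perm (Fin d) => κ.map fun x i => x (σ i) := by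
  refine Measure.AbsolutelyContinuous.mk fun N hN hN0 => ?_
  rw [Measure.sum_apply _ hN, ENNReal.tsum_eq_zero] at hN0
  set E := ⋃ σ : Equiv.Perm (Fin d), (fun (x : Fin d → α) i => x (σ i)) ⁻¹' N
  have hE : MeasurableSet E := .iUnion fun σ => measurable_comp_perm σ hN
  have hEperm : IsPermInvariant E := by
    rintro τ x hx
    obtain ⟨σ, hσ⟩ := Set.mem_iUnion.mp hx
    exact Set.mem_iUnion.mpr ⟨σ.trans τ.symm, by simpa using hσ⟩
  have hκE : κ E = 0 := measure_iUnion_null fun σ => by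
    rw [← Measure.map_apply (measurable_comp_perm σ) hN]
    exact hN0 σ
  exact measure_mono_null (fun x hx => Set.mem_iUnion.mpr ⟨1, hx⟩) (h E hE hEperm ▸ hκE)

end PermInvariant

section Joining

variable {α β : Type*} [MeasurableSpace α] [MeasurableSpace β]

theorem IsRelJoining.ae_mem [MeasurableEq (ℤ → β)] {X : Set (ℤ → α)} (hX : MeasurableSet X)
    {π : (ℤ → α) → ℤ → β} (hπ : Measurable π) {n : ℕ} {κ : Measure (Fin n → ℤ → α)}
    (hκ : IsRelJoining X π κ) : ∀ᵐ x ∂κ, (∀ i, x i ∈ X) ∧ ∀ i j, π (x i) = π (x j) :=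
  have := hκ.1
  (mem_ae_iff_prob_eq_one (by measurability)).mpr hκ.2.2

theorem IsSeparating.ae_ne [MeasurableEq (ℤ → α)] {n : ℕ} {κ : Measure (Fin n → ℤ → α)}
    [IsProbabilityMeasure κ] (hκ : IsSeparating κ) : ∀ᵐ x ∂κ, ∀ i j, i ≠ j → x i ≠ x j :=
  (mem_ae_iff_prob_eq_one (by measurability)).mpr hκ

theorem IsRelJoiningOver.measure_eq_of_isPermInvariant [StandardBorelSpace (ℤ → α)]
    [StandardBorelSpace (ℤ → β)] {X : Set (ℤ → α)} (hX : MeasurableSet X)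
    {π : (ℤ → α) → ℤ → β} (hπ : Measurable π) {ν : Measure (ℤ → β)} {d : ℕ} (hd : 0 < d)
    (hfiber : ∀ᵐ y ∂ν, (X ∩ π ⁻¹' {y}).encard = d) {κ κ' : Measure (Fin d → ℤ → α)}
    (hκ : IsRelJoiningOver X π ν κ) (hκsep : IsSeparating κ)
    (hκ' : IsRelJoiningOver X π ν κ') (hκ'sep : IsSeparating κ')
    {E : Set (Fin d → ℤ → α)} (hE : MeasurableSet E) (hEperm : IsPermInvariant E) :
    κ E = κ' E := by
  obtain ⟨D, hDν, hD, hDfiber⟩ := hfiber.exists_measurable_mem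
  set i₀ : Fin d := ⟨0, hd⟩
  set q : (Fin d → ℤ → α) → ℤ → β := fun x => π (x i₀)
  have hq : Measurable q := hπ.comp (measurable_pi_apply i₀)
  set G := {x : Fin d → ℤ → α | ((∀ i, x i ∈ X) ∧ ∀ i j, π (x i) = π (x j)) ∧
    (∀ i j, i ≠ j → x i ≠ x j) ∧ q x ∈ D}
  have hG : MeasurableSet G := by measurability
  have hGinj : ∀ x ∈ G, Injective x := fun x hx i j hij => by_contra fun h => hx.2.1 i j h hij
  have hGrange : ∀ x ∈ G, Set.range x = X ∩ π ⁻¹' {q x} := fun x hx =>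
    (hGinj x hx).range_eq_of_encard_eq
      (Set.range_subset_iff.mpr fun i => ⟨hx.1.1 i, hx.1.2 i i₀⟩) (hDfiber _ hx.2.2)
  have hGae : ∀ κ : Measure (Fin d → ℤ → α), IsRelJoiningOver X π ν κ → IsSeparating κ →
      ∀ᵐ x ∂κ, x ∈ G := fun κ hκ hκsep => by
    have := hκ.1.1
    have hqD : ∀ᵐ y ∂κ.map q, y ∈ D := by rwa [hκ.2 i₀]
    filter_upwards [hκ.1.ae_mem hX hπ, hκsep.ae_ne, ae_of_ae_map hq.aemeasurable hqD]
      with x h₁ h₂ h₃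
    exact ⟨h₁, h₂, h₃⟩
  refine _root_.measure_eq_of_isPermInvariant hG hGinj ?_ hq ?_ ?_ (hGae κ hκ hκsep)
    (hGae κ' hκ' hκ'sep) (by rw [hκ.2 i₀, hκ'.2 i₀]) hE hEperm
  · rintro σ x ⟨⟨hXx, hπx⟩, hne, hDx⟩
    exact ⟨⟨fun i => hXx (σ i), fun i j => hπx (σ i) (σ j)⟩,
      fun i j hij => hne (σ i) (σ j) (σ.injective.ne hij),
      show π (x (σ i₀)) ∈ D from hπx (σ i₀) i₀ ▸ hDx⟩
  · intro x hx σ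
    exact hx.1.2 (σ i₀) i₀
  · intro x hx x' hx' hxx'
    rw [hGrange x hx, hGrange x' hx', hxx']

end Joining

theorem degree_joining_unique_general
    (X : Set (ℤ → A)) (Y : Set (ℤ → B)) (π : (ℤ → A) → ℤ → B)
    (hXsofic : IsSofic X)
    (hfc : IsFactorCodeOn π X Y)
    (hfto : ∀ y : ℤ → B, (X ∩ π ⁻¹' {y}).Finite)
    (d : ℕ) (hd : 0 < d)
    (hdeg : ∀ y, DoublyTransitiveIn Y y → (X ∩ π ⁻¹' {y}).ncard = d)
    (ν : Measure (ℤ → B)) [IsProbabilityMeasure ν]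
    (hνerg : Ergodic shiftMap ν) (hνY : ν Y = 1) (hνfull : FullSupportOn ν Y)
    (lam lam' : Measure (Fin d → ℤ → A))
    (hlam : IsDegreeJoining X π ν d lam) (hlam' : IsDegreeJoining X π ν d lam') :
    ∃ f : Equiv.Perm (Fin d), lam' = lam.map (fun x i => x (f i)) := by
  obtain ⟨hlamErg, hlamOver, hlamSep⟩ := hlam
  obtain ⟨hlamErg', hlamOver', hlamSep'⟩ := hlam'
  have := hlamOver.1.1
  have := hlamOver'.1.1
  have hX : IsCompact X := hXsofic.isCompact
  have hπ : Continuous π := hfc.1.continuous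
  have hY : MeasurableSet Y := hfc.2 ▸ (hX.image hπ).isClosed.measurableSet
  have hfiber : ∀ᵐ y ∂ν, (X ∩ π ⁻¹' {y}).encard = d := by
    filter_upwards [ae_doublyTransitiveIn hY hνerg hνY hνfull] with y hy
    rw [← (hfto y).cast_ncard_eq, hdeg y hy]
  have hsym (E) (hE : MeasurableSet E) (hEperm : IsPermInvariant E) : lam' E = lam E :=
    hlamOver'.measure_eq_of_isPermInvariant hX.isClosed.measurableSet hπ.measurable hd hfiber
      hlamSep' hlamOver hlamSep hE hEperm
  have hperm (σ : Equiv.Perm (Fin d)) : Ergodic prodShift (lam.map fun x i => x (σ i)) :=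
    MeasurePreserving.ergodic_of_ergodic_semiconj ⟨measurable_comp_perm σ, rfl⟩ hlamErg
      measurable_prodShift fun _ => rfl
  have (σ : Equiv.Perm (Fin d)) : IsProbabilityMeasure (lam.map fun x i => x (σ i)) :=
    Measure.isProbabilityMeasure_map (measurable_comp_perm σ).aemeasurable
  exact hlamErg'.exists_eq_of_absolutelyContinuous_sum hperm
    (absolutelyContinuous_sum_map_comp_perm hsym)

/-- Degree joinings over `ν` are unique up to a permutation of
the coordinates. -/
theorem degree_joining_unique
    (X : Set (ℤ → A)) (Y : Set (ℤ → B)) (π : (ℤ → A) → ℤ → B)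
    (hXsofic : IsSofic X) (hXirr : IsIrreducibleShift X)
    (hfc : IsFactorCodeOn π X Y)
    (hfto : ∀ y : ℤ → B, (X ∩ π ⁻¹' {y}).Finite)
    (d : ℕ) (hd : 0 < d)
    (hdeg : ∀ y, DoublyTransitiveIn Y y → (X ∩ π ⁻¹' {y}).ncard = d)
    (ν : Measure (ℤ → B)) [IsProbabilityMeasure ν]
    (hνerg : Ergodic shiftMap ν) (hνY : ν Y = 1) (hνfull : FullSupportOn ν Y)
    (lam lam' : Measure (Fin d → ℤ → A))
    (hlam : IsDegreeJoining X π ν d lam) (hlam' : IsDegreeJoining X π ν d lam') :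
    ∃ f : Equiv.Perm (Fin d), lam' = lam.map (fun x i => x (f i)) :=
  degree_joining_unique_general X Y π hXsofic hfc hfto d hd hdeg ν hνerg hνY hνfull lam lam' hlam
    hlam'
end

section
/- Let T: X → X and S: Y → Y be homeomorphisms of compact metric spaces and π: X → Y a continuous surjection with π∘T = S∘π. Then the map F: Y → {1, 2, …} ∪ {∞} defined by F(y) = |π⁻¹(y)| is universally measurable, and for every ergodic S-invariant Borel probability measure ν on Y, F is constant ν-almost everywhere. -/
/-!
A fiber of `π` has at least `n` points iff it contains an injective `n`-tuple, so
`{y | n ≤ |π⁻¹(y)|}` is the projection to `Y` of the set of pairs `(f, y)` with `f : Fin n → X`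
injective and `π ∘ f ≡ y`. That set is open in a closed subset of the compact metric space
`Xⁿ × Y`, hence a countable union of compact sets, and so is its projection: the fiber
cardinality is Borel. Since `T` maps `π⁻¹(y)` bijectively onto `π⁻¹(S y)`, it is also
`S`-invariant, and an invariant measurable function is a.e. constant for an ergodic measure.
-/

open MeasureTheory Set Filter
open scoped ENNReal

open Function

theorem Set.natCast_le_encard_iff_exists_injective {X : Type*} {s : Set X} {n : ℕ} :
    (n : ℕ∞) ≤ s.encard ↔ ∃ f : Fin n → X, Injective f ∧ range f ⊆ s := by
  constructor
  · intro h
    obtain ⟨t, hts, ht⟩ := exists_subset_encard_eq h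
    have : Finite t := finite_of_encard_eq_coe ht
    have e : Fin n ≃ t := (Finite.equivFinOfCardEq <| by
      rw [Nat.card_coe_set_eq, ncard_def, ht, ENat.toNat_natCast]).symm
    exact ⟨fun i => e i, Subtype.val_injective.comp e.injective,
      range_subset_iff.2 fun i => hts (e i).2⟩
  · rintro ⟨f, hf, hfs⟩
    calc (n : ℕ∞) = ENat.card (Fin n) := by simp
      _ ≤ (range f).encard := hf.encard_range
      _ ≤ s.encard := encard_le_encard hfs

theorem isOpen_setOf_injective {ι X : Type*} [Finite ι] [TopologicalSpace X] [T2Space X] :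
    IsOpen {f : ι → X | Injective f} := by
  have : {f : ι → X | Injective f} = ⋂ i, ⋂ j, {f | f i = f j → i = j} := by
    ext f; simp [Injective]
  rw [this]
  refine isOpen_iInter_of_finite fun i => isOpen_iInter_of_finite fun j => ?_
  by_cases hij : i = j
  · simp [hij]
  · simpa [hij] using isOpen_ne_fun (continuous_apply i) (continuous_apply j)

theorem measurableSet_image_isOpen_inter_isClosed {Z Y : Type*} [PseudoEMetricSpace Z]
    [CompactSpace Z] [TopologicalSpace Y] [T2Space Y] [MeasurableSpace Y] [OpensMeasurableSpace Y]
    {g : Z → Y} (hg : Continuous g) {U C : Set Z} (hU : IsOpen U) (hC : IsClosed C) :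
    MeasurableSet (g '' (U ∩ C)) := by
  obtain ⟨F, hF, -, rfl, -⟩ := hU.exists_iUnion_isClosed
  rw [iUnion_inter, image_iUnion]
  exact .iUnion fun n => (((hF n).inter hC).isCompact.image hg).measurableSet

theorem ENat.measurable_of_measurableSet_natCast_le {α : Type*} [MeasurableSpace α] {f : α → ℕ∞}
    (h : ∀ n : ℕ, MeasurableSet {a | (n : ℕ∞) ≤ f a}) : Measurable f := by
  refine ENat.measurable_iff.2 fun n => ?_
  convert (h n).diff (h (n + 1)) using 1
  ext a
  simp only [mem_preimage, mem_singleton_iff, Set.mem_sdiff, mem_ofPred_eq, not_le]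
  constructor
  · intro ha; rw [ha]; exact ⟨le_rfl, by exact_mod_cast n.lt_succ_self⟩
  · rintro ⟨h₁, h₂⟩
    rw [Nat.cast_add, Nat.cast_one, ENat.lt_add_one_iff (ENat.natCast_ne_top n)] at h₂
    exact le_antisymm h₂ h₁

theorem setOf_natCast_le_encard_preimage_singleton {X Y : Type*} (π : X → Y) (n : ℕ) :
    {y | (n : ℕ∞) ≤ (π ⁻¹' {y}).encard} =
      Prod.snd '' ({p : (Fin n → X) × Y | Injective p.1} ∩ {p | ∀ i, π (p.1 i) = p.2}) := by
  ext y
  simp [natCast_le_encard_iff_exists_injective, range_subset_iff]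

theorem Continuous.measurable_encard_preimage_singleton {X Y : Type*} [MetricSpace X]
    [CompactSpace X] [MetricSpace Y] [CompactSpace Y] [MeasurableSpace Y] [BorelSpace Y]
    {π : X → Y} (hπ : Continuous π) : Measurable fun y => (π ⁻¹' {y}).encard := by
  refine ENat.measurable_of_measurableSet_natCast_le fun n => ?_
  rw [setOf_natCast_le_encard_preimage_singleton]
  refine measurableSet_image_isOpen_inter_isClosed continuous_snd
    (isOpen_setOf_injective.preimage continuous_fst) ?_
  simp only [ofPred_forall]
  exact isClosed_iInter fun i =>
    isClosed_eq (hπ.comp ((continuous_apply i).comp continuous_fst)) continuous_snd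

theorem Function.Semiconj.encard_preimage_singleton {X Y : Type*} {π : X → Y} {T : X → X}
    {S : Y → Y} (h : Semiconj π T S) (hT : Bijective T) (hS : Injective S) (y : Y) :
    (π ⁻¹' {S y}).encard = (π ⁻¹' {y}).encard := by
  rw [← encard_preimage_of_bijective hT]
  congr 1
  ext x
  simp [h.eq, hS.eq_iff]

theorem fiber_card_universally_measurable_and_ae_const_general
    {X Y : Type*} [MetricSpace X] [CompactSpace X] [MetricSpace Y] [CompactSpace Y]
    [MeasurableSpace Y] [BorelSpace Y]
    (T : X ≃ₜ X) (S : Y ≃ₜ Y) (π : X → Y)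
    (hπc : Continuous π)
    (hcomm : π ∘ T = S ∘ π) :
    (∀ μ : Measure Y, IsProbabilityMeasure μ →
      NullMeasurable (fun y => (π ⁻¹' {y}).encard) μ) ∧
    ∀ ν : Measure Y, IsProbabilityMeasure ν → Ergodic S ν →
      ∃ c : ℕ∞, ∀ᵐ y ∂ν, (π ⁻¹' {y}).encard = c := by
  have hmeas := hπc.measurable_encard_preimage_singleton
  have hinv : (fun y => (π ⁻¹' {y}).encard) ∘ S = fun y => (π ⁻¹' {y}).encard :=
    funext ((semiconj_iff_comp_eq.2 hcomm).encard_preimage_singleton T.bijective S.injective)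
  exact ⟨fun μ _ => hmeas.nullMeasurable,
    fun ν _ hS => hS.toPreErgodic.ae_eq_const_of_ae_eq_comp hmeas hinv⟩

/-- For a factor map `π : (X,T) → (Y,S)` between topological dynamical
systems on compact metric spaces, the fiber-cardinality map `y ↦ |π⁻¹(y)|` is universally
measurable (null-measurable for every Borel probability measure on `Y`), and it is
almost-everywhere constant with respect to every ergodic `S`-invariant Borel probability
measure on `Y`. -/
theorem fiber_card_universally_measurable_and_ae_const
    {X Y : Type*} [MetricSpace X] [CompactSpace X] [MetricSpace Y] [CompactSpace Y]
    [MeasurableSpace X] [BorelSpace X] [MeasurableSpace Y] [BorelSpace Y]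
    (T : X ≃ₜ X) (S : Y ≃ₜ Y) (π : X → Y)
    (hπc : Continuous π) (hπs : Function.Surjective π)
    (hcomm : π ∘ T = S ∘ π) :
    (∀ μ : Measure Y, IsProbabilityMeasure μ →
      NullMeasurable (fun y => (π ⁻¹' {y}).encard) μ) ∧
    ∀ ν : Measure Y, IsProbabilityMeasure ν → Ergodic S ν →
      ∃ c : ℕ∞, ∀ᵐ y ∂ν, (π ⁻¹' {y}).encard = c :=
  fiber_card_universally_measurable_and_ae_const_general T S π hπc hcomm
end

section
/- Let T: X → X and S: Y → Y be homeomorphisms of compact metric spaces, π: X → Y a continuous surjection with π∘T = S∘π, and ν an ergodic S-invariant Borel probability measure on Y such that |π⁻¹(y)| = d for ν-a.e. y, where d ∈ ℕ is finite. Then the set function μ defined on Borel sets A ⊆ X by μ(A) = (1/d) ∫_Y |π⁻¹(y) ∩ A| dν(y) is a well-defined T-invariant Borel probability measure on X with πμ = ν, its disintegration over ν assigns to ν-a.e. y the uniform distribution on the d points of π⁻¹(y), and μ is the unique T-invariant lift of ν whose disintegration is ν-a.e. the uniform distribution on the fiber. -/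
open MeasureTheory Set Filter
open scoped ENNReal

/-- `μ` has a disintegration over `ν` (along `π`) which is ν-a.e. the uniform distribution
on the `d`-point fiber `π⁻¹(y)`. -/
def HasUniformFiberDisintegration {X Y : Type*} [MeasurableSpace X] [MeasurableSpace Y]
    (π : X → Y) (ν : Measure Y) (d : ℕ) (μ : Measure X) : Prop :=
  ∃ K : Y → Measure X,
    (∀ s : Set X, MeasurableSet s →
      Measurable (fun y => K y s) ∧ μ s = ∫⁻ y, K y s ∂ν) ∧
    ∀ᵐ y ∂ν, K y (π ⁻¹' {y}) = 1 ∧ ∀ x, π x = y → K y {x} = (d : ℝ≥0∞)⁻¹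

/-!
Over `ν`-a.e. `y` the fiber `π⁻¹(y)` has exactly `d` points, and they can be enumerated by
measurable sections `σ y 0, …, σ y (d-1)`. Indeed, if `d` pairwise disjoint closures of basic open
sets all meet a `d`-point fiber, each meets it in exactly one point; so over the Borel set of such
`y`, `π` is injective on each closure and has a Borel inverse there (Lusin–Souslin). Countably many
such patterns cover all `d`-point fibers, and the inverses glue.

The lift is `μ = ∫ (1/d) ∑ᵢ δ_{σ y i} dν(y)`, so `μ A = (1/d) ∫ |π⁻¹(y) ∩ A| dν(y)`. It is
`T`-invariant because `T` maps `π⁻¹(y) ∩ T⁻¹A` bijectively onto `π⁻¹(S y) ∩ A` and `S`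
preserves `ν`.
For uniqueness, a lift `μ'` with uniform fiber disintegration `K` satisfies
`K y A ≥ K y (π⁻¹(y) ∩ A) = |π⁻¹(y) ∩ A| / d`, so `μ ≤ μ'`, and both are probability measures.
-/

open Function

section

variable {X : Type*}

theorem injective_of_mem_of_pairwise_disjoint {ι : Type*} {C : ι → Set X}
    (hC : Pairwise (Disjoint on C)) {z : ι → X} (hz : ∀ i, z i ∈ C i) : Injective z :=
  fun i j hij => by_contra fun hne => disjoint_left.1 (hC hne) (hz i) (hij ▸ hz j)

theorem encard_range_of_injective_fin {d : ℕ} {z : Fin d → X} (hz : Injective z) :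
    (range z).encard = d := by
  rw [← image_univ, hz.encard_image, encard_univ, ENat.card_eq_coe_fintype_card, Fintype.card_fin]

theorem range_eq_of_mem_of_pairwise_disjoint {d : ℕ} {F : Set X} (hF : F.encard = d)
    {C : Fin d → Set X} (hC : Pairwise (Disjoint on C)) {z : Fin d → X}
    (hz : ∀ i, z i ∈ C i ∩ F) : range z = F := by
  have hinj := injective_of_mem_of_pairwise_disjoint hC fun i => (hz i).1
  exact (toFinite _).eq_of_subset_of_encard_le (range_subset_iff.2 fun i => (hz i).2)
    (by rw [hF, encard_range_of_injective_fin hinj])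

theorem inter_subsingleton_of_pairwise_disjoint {d : ℕ} {F : Set X} (hF : F.encard = d)
    {C : Fin d → Set X} (hC : Pairwise (Disjoint on C)) (hmeet : ∀ i, (C i ∩ F).Nonempty)
    (i : Fin d) : (C i ∩ F).Subsingleton := by
  choose z hz using hmeet
  have hrange := range_eq_of_mem_of_pairwise_disjoint hF hC hz
  have hunique : ∀ x ∈ C i ∩ F, x = z i := by
    rintro x ⟨hxC, hxF⟩
    obtain ⟨j, rfl⟩ := hrange ▸ hxF
    rw [injective_of_mem_of_pairwise_disjoint hC (fun i => (hz i).1) |>.eq_iff]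
    by_contra hne
    exact disjoint_left.1 (hC hne) (hz j).1 hxC
  exact fun x hx x' hx' => (hunique x hx).trans (hunique x' hx').symm

theorem exists_pairwise_disjoint_closure_of_injective [TopologicalSpace X] [T2Space X]
    [RegularSpace X] {B : Set (Set X)} (hB : TopologicalSpace.IsTopologicalBasis B)
    {ι : Type*} [Finite ι] {w : ι → X} (hw : Injective w) :
    ∃ b : ι → B,
      Pairwise (Disjoint on fun i => closure (b i : Set X)) ∧ ∀ i, w i ∈ (b i : Set X) := by
  obtain ⟨U, hU, hdisj⟩ := (finite_range w).t2_separation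
  have := fun i => hB.exists_closure_subset ((hU (w i)).2.mem_nhds (hU (w i)).1)
  choose b hbB hwb hbU using this
  refine ⟨fun i => ⟨b i, hbB i⟩, fun i j hij => ?_, hwb⟩
  exact (hdisj (mem_range_self i) (mem_range_self j) (hw.ne hij)).mono (hbU i) (hbU j)

theorem exists_measurable_leftInvOn [MeasurableSpace X] [StandardBorelSpace X] [Nonempty X]
    {Y : Type*} [MeasurableSpace Y] [MeasurableSpace.CountablySeparated Y] {π : X → Y}
    (hπ : Measurable π) {B : Set X} (hB : MeasurableSet B) (hinj : InjOn π B) :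
    ∃ g : Y → X, Measurable g ∧ ∀ x ∈ B, g (π x) = x := by
  have := hB.standardBorel
  have hemb := (hπ.comp measurable_subtype_coe).measurableEmbedding hinj.injective
  obtain ⟨g, hg, hgπ⟩ := hemb.exists_measurable_extend measurable_subtype_coe fun _ => ‹_›
  exact ⟨g, hg, fun x hx => congrFun hgπ ⟨x, hx⟩⟩

theorem exists_measurable_of_iUnion [MeasurableSpace X] {Z : Type*} [MeasurableSpace Z]
    [Nonempty Z] {ι : Type*} [Countable ι] {F : ι → Set X} (hF : ∀ i, MeasurableSet (F i))
    {g : ι → X → Z} (hg : ∀ i, Measurable (g i)) :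
    ∃ f : X → Z, Measurable f ∧ ∀ x ∈ ⋃ i, F i, ∃ i, x ∈ F i ∧ f x = g i x := by
  classical
  rcases isEmpty_or_nonempty ι with hι | hι
  · exact ⟨fun _ => Classical.arbitrary Z, measurable_const, by simp⟩
  obtain ⟨e, he⟩ := exists_surjective_nat ι
  have hfirst : ∀ x, ∃ n, x ∈ F (e n) ∪ (⋃ i, F i)ᶜ := by
    intro x
    by_cases hx : x ∈ ⋃ i, F i
    · obtain ⟨i, hi⟩ := mem_iUnion.1 hx
      obtain ⟨n, rfl⟩ := he i
      exact ⟨n, Or.inl hi⟩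
    · exact ⟨0, Or.inr hx⟩
  refine ⟨fun x => g (e (Nat.find (hfirst x))) x,
    Measurable.find (p := fun n x => x ∈ F (e n) ∪ (⋃ i, F i)ᶜ) (fun n => hg (e n))
      (fun n => (hF (e n)).union (.compl (.iUnion hF))) hfirst,
    fun x hx => ⟨_, (Nat.find_spec (hfirst x)).resolve_right (not_not_intro hx), rfl⟩⟩

theorem exists_injective_fin_of_encard_eq {d : ℕ} {F : Set X} (hF : F.encard = d) :
    ∃ w : Fin d → X, Injective w ∧ ∀ i, w i ∈ F := by
  have : Finite F := finite_of_encard_eq_coe hF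
  have hcard : Nat.card F = d := by simp [Nat.card_coe_set_eq, ncard_def, hF]
  let e := (Finite.equivFinOfCardEq hcard).symm
  exact ⟨fun i => e i, Subtype.val_injective.comp e.injective, fun i => (e i).2⟩

theorem exists_measurable_fiber_enumeration_of_pairwise_disjoint [MeasurableSpace X]
    [StandardBorelSpace X] [Nonempty X] {Y : Type*} [MeasurableSpace Y]
    [MeasurableSpace.CountablySeparated Y] {π : X → Y} (hπ : Measurable π) {d : ℕ}
    {C : Fin d → Set X} (hCm : ∀ i, MeasurableSet (C i)) (hC : Pairwise (Disjoint on C))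
    {P : Set Y} (hP : MeasurableSet P) (hfib : ∀ y ∈ P, (π ⁻¹' {y}).encard = d)
    (hmeet : ∀ y ∈ P, ∀ i, (C i ∩ π ⁻¹' {y}).Nonempty) :
    ∃ σ : Y → Fin d → X, Measurable σ ∧
      ∀ y ∈ P, Injective (σ y) ∧ range (σ y) = π ⁻¹' {y} := by
  have hinj (i) : InjOn π (C i ∩ π ⁻¹' P) := by
    rintro x ⟨hxC, hxP⟩ x' ⟨hx'C, -⟩ hxx'
    exact inter_subsingleton_of_pairwise_disjoint (hfib _ hxP) hC (hmeet _ hxP) i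
      ⟨hxC, rfl⟩ ⟨hx'C, hxx'.symm⟩
  choose g hg hgπ using fun i =>
    exists_measurable_leftInvOn hπ ((hCm i).inter (hP.preimage hπ)) (hinj i)
  refine ⟨fun y i => g i y, measurable_pi_lambda _ hg, fun y hy => ?_⟩
  have hgC (i) : g i y ∈ C i ∩ π ⁻¹' {y} := by
    obtain ⟨x, hxC, rfl⟩ := hmeet y hy i
    rw [hgπ i x ⟨hxC, hy⟩]
    exact ⟨hxC, rfl⟩
  exact ⟨injective_of_mem_of_pairwise_disjoint hC fun i => (hgC i).1,
    range_eq_of_mem_of_pairwise_disjoint (hfib y hy) hC hgC⟩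

theorem exists_measurable_fiber_enumeration [MetricSpace X] [CompactSpace X] [MeasurableSpace X]
    [BorelSpace X] [Nonempty X] {Y : Type*} [TopologicalSpace Y] [T2Space Y] [MeasurableSpace Y]
    [BorelSpace Y] [MeasurableSpace.CountablySeparated Y] {π : X → Y} (hπ : Continuous π)
    {d : ℕ} {G : Set Y} (hG : MeasurableSet G) (hfib : ∀ y ∈ G, (π ⁻¹' {y}).encard = d) :
    ∃ σ : Y → Fin d → X, Measurable σ ∧
      ∀ y ∈ G, Injective (σ y) ∧ range (σ y) = π ⁻¹' {y} := by
  let Q := {q : Fin d → TopologicalSpace.countableBasis X //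
    Pairwise (Disjoint on fun i => closure (q i : Set X))}
  let P (q : Q) : Set Y := G ∩ ⋂ i, π '' closure (q.1 i : Set X)
  have hPm (q : Q) : MeasurableSet (P q) := hG.inter <| .iInter fun i =>
    (isClosed_closure.isCompact.image hπ).isClosed.measurableSet
  have hPmeet (q : Q) (y) (hy : y ∈ P q) (i) : (closure (q.1 i : Set X) ∩ π ⁻¹' {y}).Nonempty := by
    obtain ⟨x, hxC, rfl⟩ := mem_iInter.1 hy.2 i
    exact ⟨x, hxC, rfl⟩
  choose σ hσ hσP using fun q : Q =>
    exists_measurable_fiber_enumeration_of_pairwise_disjoint hπ.measurable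
      (fun i => isClosed_closure.measurableSet) q.2 (hPm q) (fun y hy => hfib y hy.1) (hPmeet q)
  obtain ⟨f, hf, hfσ⟩ := exists_measurable_of_iUnion hPm hσ
  refine ⟨f, hf, fun y hy => ?_⟩
  obtain ⟨w, hw, hwF⟩ := exists_injective_fin_of_encard_eq (hfib y hy)
  obtain ⟨q, hq, hwq⟩ :=
    exists_pairwise_disjoint_closure_of_injective (TopologicalSpace.isBasis_countableBasis X) hw
  obtain ⟨q', hyq', hfy⟩ := hfσ y <| mem_iUnion.2
    ⟨⟨q, hq⟩, hy, mem_iInter.2 fun i => ⟨w i, subset_closure (hwq i), hwF i⟩⟩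
  exact hfy ▸ hσP q' y hyq'

section FiberCount

variable {Y : Type*}

noncomputable def fiberCount (π : X → Y) (s : Set X) (y : Y) : ℝ≥0∞ := (π ⁻¹' {y} ∩ s).encard

theorem fiberCount_preimage (π : X → Y) (t : Set Y) (y : Y) :
    fiberCount π (π ⁻¹' t) y = t.indicator (fun y => ((π ⁻¹' {y}).encard : ℝ≥0∞)) y := by
  by_cases hy : y ∈ t
  · rw [indicator_of_mem hy, fiberCount, ← preimage_inter, singleton_inter_of_mem hy]
  · rw [indicator_of_notMem hy, fiberCount, ← preimage_inter, singleton_inter_eq_empty.2 hy,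
      preimage_empty, encard_empty, ENat.toENNReal_zero]

theorem fiberCount_preimage_bijective {π : X → Y} {T : X → X} (hT : Bijective T) {S : Y → Y}
    (hS : Injective S) (hcomm : π ∘ T = S ∘ π) (s : Set X) (y : Y) :
    fiberCount π (T ⁻¹' s) y = fiberCount π s (S y) := by
  have : π ⁻¹' {y} ∩ T ⁻¹' s = T ⁻¹' (π ⁻¹' {S y} ∩ s) := by
    ext x
    have hx : π (T x) = S (π x) := congrFun hcomm x
    simp only [mem_inter_iff, mem_preimage, mem_singleton_iff, hx, hS.eq_iff]
  rw [fiberCount, this, encard_preimage_of_bijective hT, fiberCount]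

theorem fiberCount_eq_sum_dirac [MeasurableSpace X] [MeasurableSingletonClass X] {π : X → Y}
    {y : Y} {ι : Type*} [Fintype ι] {z : ι → X} (hz : Injective z)
    (hrange : range z = π ⁻¹' {y}) (s : Set X) :
    fiberCount π s y = (∑ i, Measure.dirac (z i)) s := by
  classical
  have : z ⁻¹' s = ↑(Finset.univ.filter fun i => z i ∈ s) := by ext; simp
  rw [fiberCount, ← hrange, ← image_preimage_eq_range_inter, hz.encard_image, this,
    encard_coe_eq_coe_finsetCard]
  simp [Measure.dirac_apply, indicator_apply, Finset.sum_boole]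

variable [MeasurableSpace X] [MeasurableSpace Y] {π : X → Y} {ν : Measure Y} {d : ℕ}

theorem map_eq_of_fiberCount {μ : Measure X} (hπ : Measurable π) (hd : d ≠ 0)
    (hfib : ∀ᵐ y ∂ν, (π ⁻¹' {y}).encard = d)
    (hμ : ∀ s, MeasurableSet s → μ s = (∫⁻ y, fiberCount π s y ∂ν) / d) : μ.map π = ν := by
  ext t ht
  have hcount : (fun y => fiberCount π (π ⁻¹' t) y) =ᵐ[ν] t.indicator fun _ => (d : ℝ≥0∞) := by
    filter_upwards [hfib] with y hy
    classical
    rw [fiberCount_preimage, indicator_apply, indicator_apply, hy, ENat.toENNReal_coe]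
  rw [Measure.map_apply hπ ht, hμ _ (hπ ht), lintegral_congr_ae hcount,
    lintegral_indicator_const ht, mul_comm,
    ENNReal.mul_div_cancel_right (Nat.cast_ne_zero.2 hd) (ENNReal.natCast_ne_top d)]

theorem measurePreserving_of_fiberCount {μ : Measure X} (T : X ≃ᵐ X) (S : Y ≃ᵐ Y)
    (hS : MeasurePreserving S ν ν) (hcomm : π ∘ T = S ∘ π)
    (hμ : ∀ s, MeasurableSet s → μ s = (∫⁻ y, fiberCount π s y ∂ν) / d) :
    MeasurePreserving T μ μ := by
  refine ⟨T.measurable, Measure.ext fun s hs => ?_⟩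
  rw [Measure.map_apply T.measurable hs, hμ _ (T.measurable hs), hμ s hs]
  simp_rw [fiberCount_preimage_bijective T.bijective S.injective hcomm]
  rw [hS.lintegral_comp_emb S.measurableEmbedding]

end FiberCount

theorem Set.Finite.measure_eq_encard_mul [MeasurableSpace X] [MeasurableSingletonClass X]
    {μ : Measure X} {t : Set X} (ht : t.Finite) {c : ℝ≥0∞} (h : ∀ x ∈ t, μ {x} = c) :
    μ t = t.encard * c := by
  rw [← ht.coe_toFinset, ← sum_measure_singleton,
    Finset.sum_congr rfl fun x hx => h x (ht.mem_toFinset.1 hx), Finset.sum_const, nsmul_eq_mul,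
    encard_coe_eq_coe_finsetCard, ENat.toENNReal_coe]

section CanonicalLift

variable {Y : Type*} [MeasurableSpace X] [MeasurableSingletonClass X] {π : X → Y} {d : ℕ}

noncomputable def sectionAverage (d : ℕ) (σ : Y → Fin d → X) (y : Y) : Measure X :=
  (d : ℝ≥0∞)⁻¹ • ∑ i, Measure.dirac (σ y i)

theorem sectionAverage_apply_of_enumerates {σ : Y → Fin d → X} {y : Y} (hinj : Injective (σ y))
    (hrange : range (σ y) = π ⁻¹' {y}) (s : Set X) :
    sectionAverage d σ y s = fiberCount π s y / d := by
  rw [fiberCount_eq_sum_dirac hinj hrange, sectionAverage, Measure.smul_apply, smul_eq_mul,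
    ENNReal.div_eq_inv_mul]

variable [MeasurableSpace Y] {ν : Measure Y}

theorem measurable_sectionAverage {σ : Y → Fin d → X} (hσ : Measurable σ) :
    Measurable (sectionAverage d σ) := by
  refine Measure.measurable_of_measurable_coe _ fun s hs => ?_
  simp only [sectionAverage, Measure.smul_apply, Measure.coe_finsetSum, Finset.sum_apply,
    Measure.dirac_apply, smul_eq_mul]
  exact (Finset.measurable_sum _ fun i _ =>
    (measurable_one.indicator hs).comp ((measurable_pi_apply i).comp hσ)).const_mul _

theorem bind_sectionAverage_apply {σ : Y → Fin d → X} (hσ : Measurable σ)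
    (henum : ∀ᵐ y ∂ν, Injective (σ y) ∧ range (σ y) = π ⁻¹' {y}) (hd : d ≠ 0)
    {s : Set X} (hs : MeasurableSet s) :
    ν.bind (sectionAverage d σ) s = (∫⁻ y, fiberCount π s y ∂ν) / d := by
  rw [Measure.bind_apply hs (measurable_sectionAverage hσ).aemeasurable, div_eq_mul_inv,
    ← lintegral_mul_const' _ _ (ENNReal.inv_ne_top.2 (Nat.cast_ne_zero.2 hd))]
  exact lintegral_congr_ae (henum.mono fun y hy => sectionAverage_apply_of_enumerates hy.1 hy.2 s)

theorem hasUniformFiberDisintegration_bind {σ : Y → Fin d → X} (hσ : Measurable σ)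
    (henum : ∀ᵐ y ∂ν, Injective (σ y) ∧ range (σ y) = π ⁻¹' {y}) (hd : d ≠ 0) :
    HasUniformFiberDisintegration π ν d (ν.bind (sectionAverage d σ)) := by
  have hK := measurable_sectionAverage hσ
  refine ⟨sectionAverage d σ, fun s hs =>
    ⟨(Measure.measurable_coe hs).comp hK, Measure.bind_apply hs hK.aemeasurable⟩, ?_⟩
  filter_upwards [henum] with y ⟨hinj, hrange⟩
  have hcard : (π ⁻¹' {y}).encard = d := hrange ▸ encard_range_of_injective_fin hinj
  refine ⟨?_, fun x hx => ?_⟩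
  · rw [sectionAverage_apply_of_enumerates hinj hrange, fiberCount, inter_self, hcard,
      ENat.toENNReal_coe, ENNReal.div_self (Nat.cast_ne_zero.2 hd) (ENNReal.natCast_ne_top d)]
  · have hx' : x ∈ π ⁻¹' {y} := hx
    rw [sectionAverage_apply_of_enumerates hinj hrange, fiberCount,
      inter_eq_right.2 (singleton_subset_iff.2 hx'), encard_singleton, ENat.toENNReal_one, one_div]

theorem le_of_hasUniformFiberDisintegration {μ : Measure X}
    (h : HasUniformFiberDisintegration π ν d μ) (hd : d ≠ 0)
    (hfin : ∀ᵐ y ∂ν, (π ⁻¹' {y}).Finite) {s : Set X} (hs : MeasurableSet s) :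
    (∫⁻ y, fiberCount π s y ∂ν) / d ≤ μ s := by
  obtain ⟨K, hK, hKae⟩ := h
  rw [(hK s hs).2, div_eq_mul_inv,
    ← lintegral_mul_const' _ _ (ENNReal.inv_ne_top.2 (Nat.cast_ne_zero.2 hd))]
  refine lintegral_mono_ae ?_
  filter_upwards [hKae, hfin] with y hKy hy
  calc fiberCount π s y * (d : ℝ≥0∞)⁻¹ = K y (π ⁻¹' {y} ∩ s) :=
        ((hy.subset inter_subset_left).measure_eq_encard_mul fun x hx => hKy.2 x hx.1).symm
    _ ≤ K y s := measure_mono inter_subset_right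

end CanonicalLift

end

theorem canonical_lift_exists_unique_general
    {X Y : Type*} [MetricSpace X] [CompactSpace X] [MetricSpace Y] [CompactSpace Y]
    [MeasurableSpace X] [BorelSpace X] [MeasurableSpace Y] [BorelSpace Y]
    (T : X ≃ₜ X) (S : Y ≃ₜ Y) (π : X → Y)
    (hπc : Continuous π)
    (hcomm : π ∘ T = S ∘ π)
    (ν : Measure Y) [IsProbabilityMeasure ν] (hνerg : Ergodic S ν)
    (d : ℕ) (hd : 0 < d) (hfib : ∀ᵐ y ∂ν, (π ⁻¹' {y}).encard = d) :
    ∃ μ : Measure X,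
      (IsProbabilityMeasure μ ∧ MeasurePreserving T μ μ ∧ μ.map π = ν ∧
        (∀ s : Set X, MeasurableSet s →
          μ s = (∫⁻ y, ((π ⁻¹' {y} ∩ s).encard : ℝ≥0∞) ∂ν) / d) ∧
        HasUniformFiberDisintegration π ν d μ) ∧
      ∀ μ' : Measure X, IsProbabilityMeasure μ' → MeasurePreserving T μ' μ' →
        μ'.map π = ν → HasUniformFiberDisintegration π ν d μ' → μ' = μ := by
  have hd₀ : d ≠ 0 := hd.ne'
  have : Nonempty X := by
    obtain ⟨y, hy⟩ := hfib.exists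
    exact (nonempty_of_encard_ne_zero (s := π ⁻¹' {y}) (by simp [hy, hd₀])).to_type
  obtain ⟨G, hGae, hGm, hGfib⟩ := hfib.exists_measurable_mem
  obtain ⟨σ, hσ, hσG⟩ := exists_measurable_fiber_enumeration hπc hGm hGfib
  have henum : ∀ᵐ y ∂ν, Injective (σ y) ∧ range (σ y) = π ⁻¹' {y} := mem_of_superset hGae hσG
  let μ := ν.bind (sectionAverage d σ)
  have hμ (s : Set X) (hs : MeasurableSet s) : μ s = (∫⁻ y, fiberCount π s y ∂ν) / d :=
    bind_sectionAverage_apply hσ henum hd₀ hs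
  have hmap : μ.map π = ν := map_eq_of_fiberCount hπc.measurable hd₀ hfib hμ
  have hμprob : IsProbabilityMeasure μ :=
    have : IsProbabilityMeasure (μ.map π) := hmap ▸ ‹_›
    Measure.isProbabilityMeasure_of_map π
  refine ⟨μ, ⟨hμprob, ?_, hmap, hμ, hasUniformFiberDisintegration_bind hσ henum hd₀⟩,
    fun μ' _ _ _ hμ' => ?_⟩
  · exact measurePreserving_of_fiberCount T.toMeasurableEquiv S.toMeasurableEquiv
      hνerg.toMeasurePreserving hcomm hμ
  · have hfin : ∀ᵐ y ∂ν, (π ⁻¹' {y}).Finite := hfib.mono fun _ => finite_of_encard_eq_coe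
    refine (Measure.eq_of_le_of_isProbabilityMeasure (Measure.le_iff.2 fun s hs => ?_)).symm
    exact hμ s hs ▸ le_of_hasUniformFiberDisintegration hμ' hd₀ hfin hs

/-- If `ν` is ergodic with ν-a.e. fiber of finite cardinality `d`, then
the set function `A ↦ (1/d) ∫ |π⁻¹(y) ∩ A| dν(y)` defines a `T`-invariant Borel probability
measure lifting `ν`, whose disintegration over `ν` is a.e. uniform on the fiber, and this
canonical lift is the unique invariant lift of `ν` with a.e. uniform fiber disintegration. -/
theorem canonical_lift_exists_unique
    {X Y : Type*} [MetricSpace X] [CompactSpace X] [MetricSpace Y] [CompactSpace Y]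
    [MeasurableSpace X] [BorelSpace X] [MeasurableSpace Y] [BorelSpace Y]
    (T : X ≃ₜ X) (S : Y ≃ₜ Y) (π : X → Y)
    (hπc : Continuous π) (hπs : Function.Surjective π)
    (hcomm : π ∘ T = S ∘ π)
    (ν : Measure Y) [IsProbabilityMeasure ν] (hνerg : Ergodic S ν)
    (d : ℕ) (hd : 0 < d) (hfib : ∀ᵐ y ∂ν, (π ⁻¹' {y}).encard = d) :
    ∃ μ : Measure X,
      (IsProbabilityMeasure μ ∧ MeasurePreserving T μ μ ∧ μ.map π = ν ∧
        (∀ s : Set X, MeasurableSet s →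
          μ s = (∫⁻ y, ((π ⁻¹' {y} ∩ s).encard : ℝ≥0∞) ∂ν) / d) ∧
        HasUniformFiberDisintegration π ν d μ) ∧
      ∀ μ' : Measure X, IsProbabilityMeasure μ' → MeasurePreserving T μ' μ' →
        μ'.map π = ν → HasUniformFiberDisintegration π ν d μ' → μ' = μ :=
  canonical_lift_exists_unique_general T S π hπc hcomm ν hνerg d hd hfib
end

section
/- Let T: X → X and S: Y → Y be homeomorphisms of compact metric spaces, π: X → Y a continuous surjection with π∘T = S∘π, and ν an ergodic S-invariant Borel probability measure on Y such that |π⁻¹(y)| = d for ν-a.e. y, where d ∈ ℕ is finite. Let λ be any ergodic d-fold separating π-relative joining over ν. Then the canonical lift satisfies ℓ_π(ν) = (1/d) Σ_{i=1}^{d} p_i λ, where p_i λ denotes the i-th coordinate marginal of λ; consequently, with μ₁, …, μ_k the distinct coordinate marginals of λ and m_i the number of coordinates whose marginal is μ_i, the ergodic decomposition of ℓ_π(ν) is Σ_{i=1}^{k} (m_i/d) μ_i. -/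
open MeasureTheory Set Filter
open scoped ENNReal

/-! Almost every tuple of `λ` is separating and lies in one fibre of cardinality `d`, so its
coordinates enumerate that fibre and `|π⁻¹(π x₀) ∩ s| = ∑ⱼ 1_s(xⱼ)`. Integrating over `λ`, whose
marginals project to `ν`, gives `ℓ_π(ν) ≤ d⁻¹ ∑ⱼ pⱼλ` on measurable sets; both sides are
probability measures, so they are equal. Grouping equal marginals yields the decomposition, and
each marginal is ergodic as a factor of the ergodic joining `λ`. -/

theorem Function.Injective.encard_inter_eq_sum_indicator {ι X : Type*} [Fintype ι]
    {x : ι → X} (hx : Function.Injective x) {F : Set X} (hxF : ∀ i, x i ∈ F)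
    (hF : F.encard = Fintype.card ι) (s : Set X) :
    ((F ∩ s).encard : ℝ≥0∞) = ∑ i, s.indicator 1 (x i) := by
  classical
  have hrange_card : (range x).encard = Fintype.card ι := by
    rw [← image_univ, hx.encard_image, encard_univ, ENat.card_eq_coe_fintype_card]
  have hrange : range x = F :=
    (finite_of_encard_eq_coe hrange_card).eq_of_subset_of_encard_le (range_subset_iff.2 hxF)
      (by rw [hF, hrange_card])
  rw [← hrange, inter_comm, ← image_preimage_eq_inter_range, hx.encard_image,
    show x ⁻¹' s = ↑(Finset.univ.filter fun i => x i ∈ s) by ext; simp,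
    encard_coe_eq_coe_finsetCard]
  simp [indicator_apply, Finset.sum_boole]

theorem lintegral_sum_indicator_eval {ι X : Type*} [Fintype ι] [MeasurableSpace X]
    (lam : Measure (ι → X)) {s : Set X} (hs : MeasurableSet s) :
    ∫⁻ x, ∑ i, s.indicator 1 (x i) ∂lam = (∑ i, lam.map fun x => x i) s := by
  have hmeas : ∀ i ∈ Finset.univ,
      Measurable fun x : ι → X => s.indicator (1 : X → ℝ≥0∞) (x i) :=
    fun i _ => (measurable_one.indicator hs).comp (measurable_pi_apply i)
  rw [lintegral_finsetSum _ hmeas, Measure.finsetSum_apply]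
  refine Finset.sum_congr rfl fun i _ => ?_
  rw [Measure.map_apply (measurable_pi_apply i) hs,
    ← lintegral_indicator_one (measurable_pi_apply i hs)]
  rfl

theorem lintegral_encard_fiber_inter_le {ι X Y : Type*} [Fintype ι] [MeasurableSpace X]
    [MeasurableSpace Y] {π : X → Y} (hπ : Measurable π) {ν : Measure Y}
    {lam : Measure (ι → X)} (i₀ : ι) (hover : lam.map (fun x => π (x i₀)) = ν)
    (hfib : ∀ᵐ y ∂ν, (π ⁻¹' {y}).encard = Fintype.card ι)
    (hsep : ∀ᵐ x ∂lam, (∀ i, π (x i) = π (x i₀)) ∧ Function.Injective x)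
    {s : Set X} (hs : MeasurableSet s) :
    ∫⁻ y, ((π ⁻¹' {y} ∩ s).encard : ℝ≥0∞) ∂ν ≤ (∑ i, lam.map fun x => x i) s := by
  have hfib' : ∀ᵐ x ∂lam, (π ⁻¹' {π (x i₀)}).encard = Fintype.card ι := by
    rw [← hover] at hfib
    exact ae_of_ae_map (hπ.comp (measurable_pi_apply i₀)).aemeasurable hfib
  -- the integrand need not be measurable, so pulling it back along the marginal is only `≤`
  calc ∫⁻ y, ((π ⁻¹' {y} ∩ s).encard : ℝ≥0∞) ∂ν
      ≤ ∫⁻ x, ((π ⁻¹' {π (x i₀)} ∩ s).encard : ℝ≥0∞) ∂lam := hover ▸ lintegral_map_le _ _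
    _ = ∫⁻ x, ∑ i, s.indicator 1 (x i) ∂lam := by
      refine lintegral_congr_ae ?_
      filter_upwards [hsep, hfib'] with x hx hxF
      exact hx.2.encard_inter_eq_sum_indicator (fun i => hx.1 i) hxF s
    _ = (∑ i, lam.map fun x => x i) s := lintegral_sum_indicator_eval lam hs

theorem measurableSet_setOf_sameFiber_separating {ι X Y : Type*} [Finite ι]
    [TopologicalSpace X] [T2Space X] [MeasurableSpace X] [TopologicalSpace Y] [T2Space Y]
    [OpensMeasurableSpace (ι → X)] {π : X → Y} (hπ : Continuous π) :
    MeasurableSet {x : ι → X | (∀ i j, π (x i) = π (x j)) ∧ ∀ i j, i ≠ j → x i ≠ x j} := by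
  simp only [ofPred_and, ofPred_forall]
  refine IsClosed.measurableSet ?_ |>.inter (IsOpen.measurableSet ?_)
  · exact isClosed_iInter fun i => isClosed_iInter fun j =>
      isClosed_eq (hπ.comp (continuous_apply i)) (hπ.comp (continuous_apply j))
  · exact isOpen_iInter_of_finite fun i => isOpen_iInter_of_finite fun j =>
      isOpen_iInter_of_finite fun _ =>
        (isClosed_eq (continuous_apply (A := fun _ : ι => X) i) (continuous_apply j)).isOpen_compl

theorem Ergodic.map_eval {ι X : Type*} [MeasurableSpace X] {T : X → X} (hT : Measurable T)
    {lam : Measure (ι → X)} (h : Ergodic (fun x i => T (x i)) lam) (j : ι) :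
    Ergodic T (lam.map fun x => x j) :=
  ((measurable_pi_apply j).measurePreserving lam).ergodic_of_ergodic_semiconj h hT fun _ => rfl

theorem Finset.sum_univ_eq_sum_ncard_smul {ι κ M : Type*} [Fintype ι] [Fintype κ]
    [AddCommMonoid M] {f : ι → M} {g : κ → M} (hg : Function.Injective g)
    (hf : ∀ j, ∃ i, f j = g i) :
    ∑ j, f j = ∑ i, {j | f j = g i}.ncard • g i := by
  classical
  choose c hc using hf
  have hfiber : ∀ i, {j | f j = g i} = ↑(Finset.univ.filter fun j => c j = i) := by
    intro i; ext j
    simp only [mem_ofPred_eq, Finset.coe_filter, Finset.mem_univ, true_and, hc, hg.eq_iff]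
  rw [← Finset.sum_fiberwise Finset.univ c f]
  refine Finset.sum_congr rfl fun i _ => ?_
  rw [hfiber, ncard_coe_finset, ← Finset.sum_const]
  exact Finset.sum_congr rfl fun j hj => by rw [hc, (Finset.mem_filter.1 hj).2]

theorem canonical_lift_ergodic_decomposition_general
    {X Y : Type*} [MetricSpace X] [CompactSpace X] [MetricSpace Y]
    [MeasurableSpace X] [BorelSpace X] [MeasurableSpace Y] [BorelSpace Y]
    (T : X ≃ₜ X) (π : X → Y)
    (hπc : Continuous π)
    (ν : Measure Y) [IsProbabilityMeasure ν]
    (d : ℕ) (hd : 0 < d) (hfib : ∀ᵐ y ∂ν, (π ⁻¹' {y}).encard = d)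
    (lam : Measure (Fin d → X)) [IsProbabilityMeasure lam]
    (hlamerg : Ergodic (fun x i => T (x i)) lam)
    (hlamfib : lam {x | (∀ i j, π (x i) = π (x j)) ∧ ∀ i j, i ≠ j → x i ≠ x j} = 1)
    (hlamover : ∀ i : Fin d, lam.map (fun x => π (x i)) = ν)
    (ell : Measure X)
    (hell : ∀ s : Set X, MeasurableSet s →
      ell s = (∫⁻ y, ((π ⁻¹' {y} ∩ s).encard : ℝ≥0∞) ∂ν) / d)
    (k : ℕ) (μs : Fin k → Measure X) (hμsinj : Function.Injective μs)
    (hμsmarg : ∀ i : Fin k, ∃ j : Fin d, lam.map (fun x => x j) = μs i)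
    (hmargμs : ∀ j : Fin d, ∃ i : Fin k, lam.map (fun x => x j) = μs i)
    (m : Fin k → ℕ)
    (hm : ∀ i, m i = {j : Fin d | lam.map (fun x => x j) = μs i}.ncard) :
    ell = (d : ℝ≥0∞)⁻¹ • ∑ j : Fin d, lam.map (fun x => x j) ∧
    (∀ i : Fin k, Ergodic T (μs i)) ∧
    ell = ∑ i : Fin k, ((m i : ℝ≥0∞) / d) • μs i := by
  have hd₀ : (d : ℝ≥0∞) ≠ 0 := Nat.cast_ne_zero.2 hd.ne'
  have hsep : ∀ᵐ x ∂lam, (∀ i, π (x i) = π (x ⟨0, hd⟩)) ∧ Function.Injective x := by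
    have hgood := measurableSet_setOf_sameFiber_separating (ι := Fin d) hπc
    filter_upwards [(ae_mem_iff_measure_eq hgood.nullMeasurableSet).2 (by simp [hlamfib])]
      with x hx
    exact ⟨fun i => hx.1 i _, fun i j hij => by_contra fun hne => hx.2 i j hne hij⟩
  have hmarg : ∀ j : Fin d, IsProbabilityMeasure (lam.map fun x => x j) :=
    fun j => Measure.isProbabilityMeasure_map (measurable_pi_apply j).aemeasurable
  have hell₁ : IsProbabilityMeasure ell := ⟨by
    rw [hell univ .univ, lintegral_congr_ae (g := fun _ => (d : ℝ≥0∞)) (hfib.mono fun y hy => by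
      simp [hy]), lintegral_const, measure_univ, mul_one,
      ENNReal.div_self hd₀ (ENNReal.natCast_ne_top d)]⟩
  have havg₁ : IsProbabilityMeasure ((d : ℝ≥0∞)⁻¹ • ∑ j : Fin d, lam.map fun x => x j) := ⟨by
    simp [ENNReal.inv_mul_cancel hd₀ (ENNReal.natCast_ne_top d)]⟩
  have hlift : ell = (d : ℝ≥0∞)⁻¹ • ∑ j : Fin d, lam.map (fun x => x j) := by
    refine Measure.eq_of_le_of_isProbabilityMeasure (Measure.le_iff.2 fun s hs => ?_)
    rw [hell s hs, ENNReal.div_eq_inv_mul, Measure.smul_apply, smul_eq_mul]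
    gcongr
    simpa using lintegral_encard_fiber_inter_le hπc.measurable _ (hlamover _)
      (by simpa using hfib) hsep hs
  refine ⟨hlift, fun i => ?_, ?_⟩
  · obtain ⟨j, hj⟩ := hμsmarg i
    exact hj ▸ hlamerg.map_eval T.continuous.measurable j
  · simp_rw [hlift, Finset.sum_univ_eq_sum_ncard_smul hμsinj hmargμs, ← hm, Finset.smul_sum,
      ← Nat.cast_smul_eq_nsmul ℝ≥0∞, smul_smul, ENNReal.div_eq_inv_mul]

/-- The canonical lift `ℓ_π(ν)` (defined by
`ℓ(s) = (1/d) ∫ |π⁻¹(y) ∩ s| dν(y)`) equals the average `(1/d) ∑ᵢ pᵢ λ` of the coordinate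
marginals of any ergodic `d`-fold separating relative joining `λ` over `ν`; consequently,
if `μ₁, …, μ_k` are the distinct coordinate marginals of `λ` and `mᵢ` the number of
coordinates with marginal `μᵢ`, then each `μᵢ` is ergodic and
`ℓ_π(ν) = ∑ᵢ (mᵢ/d) μᵢ` is the ergodic decomposition of the canonical lift. -/
theorem canonical_lift_ergodic_decomposition
    {X Y : Type*} [MetricSpace X] [CompactSpace X] [MetricSpace Y] [CompactSpace Y]
    [MeasurableSpace X] [BorelSpace X] [MeasurableSpace Y] [BorelSpace Y]
    (T : X ≃ₜ X) (S : Y ≃ₜ Y) (π : X → Y)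
    (hπc : Continuous π) (hπs : Function.Surjective π)
    (hcomm : π ∘ T = S ∘ π)
    (ν : Measure Y) [IsProbabilityMeasure ν] (hνerg : Ergodic S ν)
    (d : ℕ) (hd : 0 < d) (hfib : ∀ᵐ y ∂ν, (π ⁻¹' {y}).encard = d)
    (lam : Measure (Fin d → X)) [IsProbabilityMeasure lam]
    (hlamerg : Ergodic (fun x i => T (x i)) lam)
    (hlamfib : lam {x | (∀ i j, π (x i) = π (x j)) ∧ ∀ i j, i ≠ j → x i ≠ x j} = 1)
    (hlamover : ∀ i : Fin d, lam.map (fun x => π (x i)) = ν)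
    (ell : Measure X)
    (hell : ∀ s : Set X, MeasurableSet s →
      ell s = (∫⁻ y, ((π ⁻¹' {y} ∩ s).encard : ℝ≥0∞) ∂ν) / d)
    (k : ℕ) (μs : Fin k → Measure X) (hμsinj : Function.Injective μs)
    (hμsmarg : ∀ i : Fin k, ∃ j : Fin d, lam.map (fun x => x j) = μs i)
    (hmargμs : ∀ j : Fin d, ∃ i : Fin k, lam.map (fun x => x j) = μs i)
    (m : Fin k → ℕ)
    (hm : ∀ i, m i = {j : Fin d | lam.map (fun x => x j) = μs i}.ncard) :
    ell = (d : ℝ≥0∞)⁻¹ • ∑ j : Fin d, lam.map (fun x => x j) ∧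
    (∀ i : Fin k, Ergodic T (μs i)) ∧
    ell = ∑ i : Fin k, ((m i : ℝ≥0∞) / d) • μs i :=
  canonical_lift_ergodic_decomposition_general T π hπc ν d hd hfib lam hlamerg hlamfib hlamover ell
    hell k μs hμsinj hμsmarg hmargμs m hm
end

section
/- Let T: X → X and S: Y → Y be homeomorphisms of compact metric spaces, π: X → Y a continuous surjection with π∘T = S∘π, and ν an ergodic S-invariant Borel probability measure on Y such that |π⁻¹(y)| = d for ν-a.e. y, where d ∈ ℕ is finite. Then the canonical lift ℓ_π(ν) is ergodic if and only if there is exactly one T-invariant Borel probability measure μ on X with πμ = ν, in which case ℓ_π(ν) is that unique invariant lift. -/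
/-!
Every invariant lift `μ` of `ν` is absolutely continuous with respect to the canonical lift `ℓ`:
for compact `K ⊆ X` one has `μ K ≤ ν (π '' K) ≤ ∫ |π⁻¹(y) ∩ K| dν = d · ℓ K`.
Conversely, an invariant probability measure `μ ≪ ℓ` is a lift, since `π₊μ` is `S`-invariant and
absolutely continuous with respect to the ergodic measure `ν`.
If `ℓ` is ergodic, every lift is invariant and `≪ ℓ`, hence equal to `ℓ`.
If `ℓ` is not ergodic, it is not an extreme point of the invariant probability measures, and the
two distinct measures of which it is a proper convex combination are both `≪ ℓ`, hence both lifts.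
-/

open MeasureTheory Measure Set Function
open scoped ENNReal

def IsCanonicalLift {X Y : Type*} [MeasurableSpace X] [MeasurableSpace Y] (π : X → Y)
    (ν : Measure Y) (d : ℕ) (ell : Measure X) : Prop :=
  ∀ s : Set X, MeasurableSet s → ell s = (∫⁻ y, ((π ⁻¹' {y} ∩ s).encard : ℝ≥0∞) ∂ν) / d

section Lifts

variable {X Y : Type*} [MeasurableSpace X] [MeasurableSpace Y]
  {T : X → X} {S : Y → Y} {π : X → Y} {ν : Measure Y}

theorem absolutelyContinuous_of_mem_openSegment {μ μ₁ μ₂ : Measure X}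
    (h : μ ∈ openSegment ℝ≥0∞ μ₁ μ₂) : μ₁ ≪ μ := by
  obtain ⟨a, b, ha, -, -, rfl⟩ := h
  exact (absolutelyContinuous_smul ha.ne').add_right _

theorem map_eq_of_absolutelyContinuous_lift [IsProbabilityMeasure ν] {μ ell : Measure X}
    [IsProbabilityMeasure μ] (hπ : Measurable π) (hsemi : Semiconj π T S) (hν : Ergodic S ν)
    (hμ : MeasurePreserving T μ μ) (hell : ell.map π = ν) (hμell : μ ≪ ell) :
    μ.map π = ν :=
  have : IsProbabilityMeasure (μ.map π) := isProbabilityMeasure_map hπ.aemeasurable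
  hν.eq_of_absolutelyContinuous
    (MeasurePreserving.of_semiconj ⟨hπ, rfl⟩ hμ hsemi hν.measurable) (hell ▸ hμell.map hπ)

theorem ergodic_iff_existsUnique_lift [IsProbabilityMeasure ν] {ell : Measure X}
    [IsProbabilityMeasure ell] (hπ : Measurable π) (hsemi : Semiconj π T S) (hν : Ergodic S ν)
    (hT : MeasurePreserving T ell ell) (hell : ell.map π = ν)
    (hdom : ∀ μ : Measure X, IsProbabilityMeasure μ → μ.map π = ν → μ ≪ ell) :
    Ergodic T ell ↔
      ∃! μ : Measure X, IsProbabilityMeasure μ ∧ MeasurePreserving T μ μ ∧ μ.map π = ν := by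
  constructor
  · intro herg
    refine ⟨ell, ⟨inferInstance, hT, hell⟩, ?_⟩
    rintro μ ⟨hμ, hTμ, hπμ⟩
    exact herg.eq_of_absolutelyContinuous hTμ (hdom μ hμ hπμ)
  · rintro ⟨μ₀, -, huniq⟩
    refine Ergodic.of_mem_extremePoints (mem_extremePoints_iff_left.2 ⟨⟨hT, inferInstance⟩, ?_⟩)
    rintro μ ⟨hTμ, hμ⟩ _ _ hseg
    have hπμ := map_eq_of_absolutelyContinuous_lift hπ hsemi hν hTμ hell
      (absolutelyContinuous_of_mem_openSegment hseg)
    exact (huniq μ ⟨hμ, hTμ, hπμ⟩).trans (huniq ell ⟨inferInstance, hT, hell⟩).symm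

end Lifts

theorem Function.Semiconj.encard_fiber_inter_preimage {X Y : Type*} {T : X → X} {S : Y → Y}
    {π : X → Y} (hsemi : Semiconj π T S) (hT : Bijective T) (hS : Injective S) (y : Y)
    (A : Set X) : (π ⁻¹' {y} ∩ T ⁻¹' A).encard = (π ⁻¹' {S y} ∩ A).encard := by
  have hfiber : π ⁻¹' {y} ∩ T ⁻¹' A = T ⁻¹' (π ⁻¹' {S y} ∩ A) := by
    ext x
    simp [hsemi x, hS.eq_iff]
  rw [hfiber, encard_preimage_of_bijective hT]

theorem measure_image_le_lintegral_encard_fiber_inter {X Y : Type*} [MeasurableSpace Y]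
    {π : X → Y} {K : Set X} (hK : MeasurableSet (π '' K)) (ν : Measure Y) :
    ν (π '' K) ≤ ∫⁻ y, ((π ⁻¹' {y} ∩ K).encard : ℝ≥0∞) ∂ν := by
  rw [← lintegral_indicator_one hK]
  refine lintegral_mono fun y ↦ ?_
  by_cases hy : y ∈ π '' K
  · obtain ⟨x, hxK, rfl⟩ := hy
    rw [indicator_of_mem (mem_image_of_mem π hxK), Pi.one_apply]
    have hne : 1 ≤ (π ⁻¹' {π x} ∩ K).encard := one_le_encard_iff_nonempty.2 ⟨x, rfl, hxK⟩
    simpa using ENat.toENNReal_le.2 hne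
  · simp [indicator_of_notMem hy]

namespace IsCanonicalLift

variable {X Y : Type*} [MeasurableSpace X] [MeasurableSpace Y]
  {π : X → Y} {ν : Measure Y} {d : ℕ} {ell : Measure X}

theorem map_eq (h : IsCanonicalLift π ν d ell) (hπ : Measurable π) (hd : d ≠ 0)
    (hfib : ∀ᵐ y ∂ν, (π ⁻¹' {y}).encard = d) : ell.map π = ν := by
  ext B hB
  have hcount : ∀ᵐ y ∂ν,
      ((π ⁻¹' {y} ∩ π ⁻¹' B).encard : ℝ≥0∞) = B.indicator (fun _ ↦ (d : ℝ≥0∞)) y := by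
    filter_upwards [hfib] with y hy
    rw [← preimage_inter]
    by_cases hyB : y ∈ B
    · simp [singleton_inter_of_mem hyB, hy, hyB]
    · simp [singleton_inter_of_notMem hyB, hyB]
  rw [map_apply hπ hB, h _ (hπ hB), lintegral_congr_ae hcount, lintegral_indicator hB,
    setLIntegral_const, mul_comm, ENNReal.mul_div_cancel_right (by exact_mod_cast hd)
    (ENNReal.natCast_ne_top d)]

theorem isProbabilityMeasure [IsProbabilityMeasure ν] (h : IsCanonicalLift π ν d ell)
    (hπ : Measurable π) (hd : d ≠ 0) (hfib : ∀ᵐ y ∂ν, (π ⁻¹' {y}).encard = d) :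
    IsProbabilityMeasure ell := by
  rw [← isProbabilityMeasure_map_iff hπ.aemeasurable, h.map_eq hπ hd hfib]
  infer_instance

theorem measurePreserving (h : IsCanonicalLift π ν d ell) {T : X → X} {S : Y → Y}
    (hTm : Measurable T) (hT : Bijective T) (hS : MeasurePreserving S ν ν)
    (hSemb : MeasurableEmbedding S) (hsemi : Semiconj π T S) :
    MeasurePreserving T ell ell := by
  refine ⟨hTm, Measure.ext fun A hA ↦ ?_⟩
  rw [map_apply hTm hA, h _ (hTm hA), h A hA]
  congr 1
  calc ∫⁻ y, ((π ⁻¹' {y} ∩ T ⁻¹' A).encard : ℝ≥0∞) ∂ν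
      = ∫⁻ y, ((π ⁻¹' {S y} ∩ A).encard : ℝ≥0∞) ∂ν := by
        simp only [hsemi.encard_fiber_inter_preimage hT hSemb.injective]
    _ = ∫⁻ y, ((π ⁻¹' {y} ∩ A).encard : ℝ≥0∞) ∂ν :=
        hS.lintegral_comp_emb hSemb fun y ↦ ((π ⁻¹' {y} ∩ A).encard : ℝ≥0∞)

end IsCanonicalLift

theorem IsCanonicalLift.absolutelyContinuous {X Y : Type*} [TopologicalSpace X] [T2Space X]
    [MeasurableSpace X] [OpensMeasurableSpace X] [TopologicalSpace Y] [T2Space Y] [MeasurableSpace Y] [BorelSpace Y]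
    {π : X → Y} {ν : Measure Y} {d : ℕ} {ell μ : Measure X} [μ.InnerRegular]
    (h : IsCanonicalLift π ν d ell) (hπ : Continuous π) (hμ : μ.map π = ν) : μ ≪ ell := by
  refine AbsolutelyContinuous.mk fun A hA hA0 ↦ ?_
  rw [hA.measure_eq_iSup_isCompact μ]
  refine ENNReal.iSup_eq_zero.2 fun K ↦ ENNReal.iSup_eq_zero.2 fun hKA ↦
    ENNReal.iSup_eq_zero.2 fun hK ↦ le_antisymm ?_ zero_le
  have hcount : ∫⁻ y, ((π ⁻¹' {y} ∩ K).encard : ℝ≥0∞) ∂ν = 0 := by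
    simpa [h K hK.isClosed.measurableSet, ENNReal.div_eq_zero_iff] using
      measure_mono_null hKA hA0
  calc μ K ≤ μ (π ⁻¹' (π '' K)) := measure_mono (subset_preimage_image π K)
    _ ≤ ν (π '' K) := hμ ▸ le_map_apply hπ.aemeasurable _
    _ ≤ ∫⁻ y, ((π ⁻¹' {y} ∩ K).encard : ℝ≥0∞) ∂ν :=
      measure_image_le_lintegral_encard_fiber_inter (hK.image hπ).isClosed.measurableSet ν
    _ = 0 := hcount

theorem canonical_lift_ergodic_iff_unique_lift_general
    {X Y : Type*} [MetricSpace X] [CompactSpace X] [MetricSpace Y]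
    [MeasurableSpace X] [BorelSpace X] [MeasurableSpace Y] [BorelSpace Y]
    (T : X ≃ₜ X) (S : Y ≃ₜ Y) (π : X → Y)
    (hπc : Continuous π)
    (hcomm : π ∘ T = S ∘ π)
    (ν : Measure Y) [IsProbabilityMeasure ν] (hνerg : Ergodic S ν)
    (d : ℕ) (hd : 0 < d) (hfib : ∀ᵐ y ∂ν, (π ⁻¹' {y}).encard = d)
    (ell : Measure X)
    (hell : ∀ s : Set X, MeasurableSet s →
      ell s = (∫⁻ y, ((π ⁻¹' {y} ∩ s).encard : ℝ≥0∞) ∂ν) / d) :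
    (Ergodic T ell ↔
      ∃! μ : Measure X,
        IsProbabilityMeasure μ ∧ MeasurePreserving T μ μ ∧ μ.map π = ν) ∧
    (Ergodic T ell →
      (IsProbabilityMeasure ell ∧ MeasurePreserving T ell ell ∧ ell.map π = ν) ∧
      ∀ μ : Measure X, IsProbabilityMeasure μ → MeasurePreserving T μ μ →
        μ.map π = ν → μ = ell) := by
  have hcan : IsCanonicalLift π ν d ell := hell
  have hsemi : Semiconj π T S := semiconj_iff_comp_eq.2 hcomm
  have hmap := hcan.map_eq hπc.measurable hd.ne' hfib
  have hprob := hcan.isProbabilityMeasure hπc.measurable hd.ne' hfib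
  have hT := hcan.measurePreserving T.continuous.measurable T.bijective
    hνerg.toMeasurePreserving S.measurableEmbedding hsemi
  have key := ergodic_iff_existsUnique_lift hπc.measurable hsemi hνerg hT hmap
    fun μ _ hμ ↦ hcan.absolutelyContinuous hπc hμ
  exact ⟨key, fun herg ↦ ⟨⟨hprob, hT, hmap⟩, fun μ hμ hTμ hπμ ↦
    (key.1 herg).unique ⟨hμ, hTμ, hπμ⟩ ⟨hprob, hT, hmap⟩⟩⟩

/-- The canonical lift `ℓ_π(ν)` (defined by
`ℓ(s) = (1/d) ∫ |π⁻¹(y) ∩ s| dν(y)`) is ergodic if and only if `ν` has exactly one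
`T`-invariant lift; in that case the canonical lift is that unique invariant lift. -/
theorem canonical_lift_ergodic_iff_unique_lift
    {X Y : Type*} [MetricSpace X] [CompactSpace X] [MetricSpace Y] [CompactSpace Y]
    [MeasurableSpace X] [BorelSpace X] [MeasurableSpace Y] [BorelSpace Y]
    (T : X ≃ₜ X) (S : Y ≃ₜ Y) (π : X → Y)
    (hπc : Continuous π) (hπs : Function.Surjective π)
    (hcomm : π ∘ T = S ∘ π)
    (ν : Measure Y) [IsProbabilityMeasure ν] (hνerg : Ergodic S ν)
    (d : ℕ) (hd : 0 < d) (hfib : ∀ᵐ y ∂ν, (π ⁻¹' {y}).encard = d)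
    (ell : Measure X)
    (hell : ∀ s : Set X, MeasurableSet s →
      ell s = (∫⁻ y, ((π ⁻¹' {y} ∩ s).encard : ℝ≥0∞) ∂ν) / d) :
    (Ergodic T ell ↔
      ∃! μ : Measure X,
        IsProbabilityMeasure μ ∧ MeasurePreserving T μ μ ∧ μ.map π = ν) ∧
    (Ergodic T ell →
      (IsProbabilityMeasure ell ∧ MeasurePreserving T ell ell ∧ ell.map π = ν) ∧
      ∀ μ : Measure X, IsProbabilityMeasure μ → MeasurePreserving T μ μ →
        μ.map π = ν → μ = ell) :=
  canonical_lift_ergodic_iff_unique_lift_general T S π hπc hcomm ν hνerg d hd hfib ell hell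
end
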